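/- arXiv:0911.4759 — 6 statements merged into one kernel-verified Lean document; each statement's English description precedes it below -/
import Mathlib

section
/- Let w be a real-valued function on the punctured unit disk Δ* = {z ∈ ℂ : 0 < |z| < 1} that is C², subharmonic (Δw ≥ 0) and nonnegative on Δ*, extends continuously to {z : 0 < |z| ≤ 1} with w = 0 on the exterior boundary circle {|z| = 1}, and has finite Dirichlet energy ∫_{Δ*} |∇w|² < ∞. Then w ≡ 0 on Δ*. -/
open MeasureTheory

/-- Partial derivative in the real direction of `w : ℂ → ℝ`. -/
noncomputable def pdX (w : ℂ → ℝ) (z : ℂ) : ℝ := fderiv ℝ w z 1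

/-- Partial derivative in the imaginary direction of `w : ℂ → ℝ`. -/
noncomputable def pdY (w : ℂ → ℝ) (z : ℂ) : ℝ := fderiv ℝ w z Complex.I

/-- The Euclidean Laplacian of `w : ℂ → ℝ`. -/
noncomputable def lap (w : ℂ → ℝ) (z : ℂ) : ℝ :=
  fderiv ℝ (fun ζ => fderiv ℝ w ζ 1) z 1
    + fderiv ℝ (fun ζ => fderiv ℝ w ζ Complex.I) z Complex.I

open Metric Set Real

/-!
Let `A(r)` and `B(r)` be the averages of `w` and of `r ∂_r w` over the circle `|z| = r`, so that
`A' = B / r`. Since `r² Δ = (r ∂_r)² + ∂_θ²` and an angular derivative averages to zero over a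
circle, `B' = r · avg Δw ≥ 0`. If `B(r₀) < 0`, then `B ≤ B(r₀)` on `(0, r₀)`, and Cauchy–Schwarz
gives `r · avg |∇w|² ≥ B(r₀)² / r` there. This is not integrable at `0`, whereas in polar
coordinates finite energy makes `r · avg |∇w|²` integrable on `(0, 1)`. Hence
`B ≥ 0`, so `A` is nondecreasing and `0 ≤ A(r) ≤ A(1) = 0`; a nonnegative continuous function with
zero circle average vanishes on the circle.
-/

namespace Complex

variable {E : Type*} [NormedAddCommGroup E] [NormedSpace ℝ E] {f : ℂ → E} {U : Set ℂ} {z : ℂ}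

/-- In polar coordinates `z = r e^{iθ}`: `eulerDeriv f = r ∂_r f`, `angularDeriv f = ∂_θ f`. -/
noncomputable def eulerDeriv (f : ℂ → E) (z : ℂ) : E := fderiv ℝ f z z

noncomputable def angularDeriv (f : ℂ → E) (z : ℂ) : E := fderiv ℝ f z (z * I)

theorem re_smul_one_add_im_smul_I (u : ℂ) : u = u.re • (1 : ℂ) + u.im • I := by
  apply Complex.ext <;> simp

theorem sq_apply_le_sq_norm_mul (L : ℂ →L[ℝ] ℝ) (v : ℂ) :
    L v ^ 2 ≤ ‖v‖ ^ 2 * (L 1 ^ 2 + L I ^ 2) := by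
  rw [Complex.sq_norm, Complex.normSq_apply]
  conv_lhs => rw [re_smul_one_add_im_smul_I v]
  simp only [map_add, map_smul, smul_eq_mul]
  nlinarith [sq_nonneg (v.re * L I - v.im * L 1)]

theorem apply_add_apply_mul_I (L : ℂ →L[ℝ] ℂ →L[ℝ] ℝ) (u : ℂ) :
    L u u + L (u * I) (u * I) = ‖u‖ ^ 2 * (L 1 1 + L I I) := by
  have hI : u * I = (-u.im) • (1 : ℂ) + u.re • I := by
    apply Complex.ext <;> simp
  have key (a b : ℝ) :
      L (a • 1 + b • I) (a • 1 + b • I) + L ((-b) • 1 + a • I) ((-b) • 1 + a • I)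
        = (a ^ 2 + b ^ 2) * (L 1 1 + L I I) := by
    simp only [map_add, map_smul, add_apply, smul_apply, smul_eq_mul]
    ring
  have := key u.re u.im
  rw [← re_smul_one_add_im_smul_I, ← hI] at this
  rw [this, Complex.sq_norm, Complex.normSq_apply]
  ring

theorem fderiv_fderiv_apply_mul_apply (hf : DifferentiableAt ℝ (fderiv ℝ f) z) (a : ℂ) :
    fderiv ℝ (fun y => fderiv ℝ f y (y * a)) z (z * a)
      = fderiv ℝ (fderiv ℝ f) z (z * a) (z * a) + fderiv ℝ f z (z * a * a) := by
  rw [fderiv_clm_apply hf (differentiableAt_fun_id.mul_const a),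
    fderiv_mul_const differentiableAt_fun_id]
  simp [add_comm, mul_comm a]

theorem lap_eq_fderiv_fderiv {w : ℂ → ℝ} (hw : DifferentiableAt ℝ (fderiv ℝ w) z) :
    lap w z = fderiv ℝ (fderiv ℝ w) z 1 1 + fderiv ℝ (fderiv ℝ w) z I I := by
  simp [lap, fderiv_clm_apply hw (differentiableAt_const _)]

theorem eulerDeriv_eulerDeriv_add_angularDeriv_angularDeriv {w : ℂ → ℝ}
    (hw : DifferentiableAt ℝ (fderiv ℝ w) z) :
    eulerDeriv (eulerDeriv w) z + angularDeriv (angularDeriv w) z = ‖z‖ ^ 2 * lap w z := by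
  have h₁ := fderiv_fderiv_apply_mul_apply hw 1
  simp only [mul_one] at h₁
  have h₂ := fderiv_fderiv_apply_mul_apply hw I
  rw [mul_assoc, I_mul_I, mul_neg_one, map_neg] at h₂
  unfold eulerDeriv angularDeriv
  rw [h₁, h₂, lap_eq_fderiv_fderiv hw, ← apply_add_apply_mul_I]
  abel

theorem _root_.ContDiffOn.eulerDeriv {m n : WithTop ℕ∞} (hf : ContDiffOn ℝ n f U)
    (hU : IsOpen U) (hmn : m + 1 ≤ n) : ContDiffOn ℝ m (eulerDeriv f) U :=
  (hf.fderiv_of_isOpen hU hmn).clm_apply contDiffOn_id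

theorem _root_.ContDiffOn.angularDeriv {m n : WithTop ℕ∞} (hf : ContDiffOn ℝ n f U)
    (hU : IsOpen U) (hmn : m + 1 ≤ n) : ContDiffOn ℝ m (angularDeriv f) U :=
  (hf.fderiv_of_isOpen hU hmn).clm_apply (contDiffOn_id.mul contDiffOn_const)

theorem hasDerivAt_circleMap_radius (c : ℂ) (R θ : ℝ) :
    HasDerivAt (fun ρ : ℝ => circleMap c ρ θ) (circleMap 0 1 θ) R := by
  simpa [circleMap] using ((hasDerivAt_id R).ofReal_comp.mul_const (exp (θ * I))).const_add c

theorem dist_circleMap_circleMap (c : ℂ) (R R' θ : ℝ) :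
    dist (circleMap c R θ) (circleMap c R' θ) = |R - R'| := by
  simp [dist_eq, circleMap, ← sub_mul, ← ofReal_sub]

theorem hasDerivAt_circleAverage_radius [CompleteSpace E] (hU : IsOpen U)
    (hf : ContDiffOn ℝ 1 f U) {r : ℝ} (hr : r ≠ 0) (hsph : sphere (0 : ℂ) |r| ⊆ U) :
    HasDerivAt (circleAverage f 0) (r⁻¹ • circleAverage (eulerDeriv f) 0 r) r := by
  obtain ⟨δ, hδ, hKU⟩ := (isCompact_sphere (0 : ℂ) |r|).exists_cthickening_subset_open hU hsph
  have hDf : ContinuousOn (fderiv ℝ f) U := hf.continuousOn_fderiv_of_isOpen hU le_rfl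
  obtain ⟨M, hM⟩ :=
    (isCompact_sphere (0 : ℂ) |r|).cthickening.exists_bound_of_continuousOn (hDf.mono hKU)
  have hmem : ∀ ρ ∈ ball r δ, ∀ θ, circleMap 0 ρ θ ∈ cthickening δ (sphere (0 : ℂ) |r|) :=
    fun ρ hρ θ => mem_cthickening_of_dist_le _ _ _ _ (circleMap_mem_sphere' 0 r θ)
      (by rw [dist_circleMap_circleMap, ← Real.dist_eq]; exact (mem_ball.1 hρ).le)
  have hdiff : ∀ z ∈ U, HasFDerivAt f (fderiv ℝ f z) z := fun z hz =>
    ((hf.differentiableOn one_ne_zero z hz).differentiableAt (hU.mem_nhds hz)).hasFDerivAt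
  have key := intervalIntegral.hasDerivAt_integral_of_dominated_loc_of_deriv_le
    (F := fun ρ θ => f (circleMap 0 ρ θ))
    (F' := fun ρ θ => fderiv ℝ f (circleMap 0 ρ θ) (circleMap 0 1 θ))
    (bound := fun _ => M) (μ := volume) (a := 0) (b := 2 * π) (ball_mem_nhds r hδ)
    (Filter.eventually_of_mem (ball_mem_nhds r hδ) fun ρ hρ =>
      ((hf.continuousOn.mono hKU).comp_continuous (continuous_circleMap 0 ρ)
        (hmem ρ hρ)).aestronglyMeasurable)
    (((hf.continuousOn.mono hsph).comp_continuous (continuous_circleMap 0 r)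
      (circleMap_mem_sphere' 0 r)).intervalIntegrable _ _)
    (((hDf.mono hsph).comp_continuous (continuous_circleMap 0 r)
      (circleMap_mem_sphere' 0 r)).clm_apply (continuous_circleMap 0 1)).aestronglyMeasurable
    (ae_of_all _ fun θ _ ρ hρ => by
      simpa using (fderiv ℝ f (circleMap 0 ρ θ)).le_opNorm (circleMap 0 1 θ) |>.trans
        (by simpa using hM _ (hmem ρ hρ θ)))
    intervalIntegrable_const
    (ae_of_all _ fun θ _ ρ hρ => (hdiff _ (hKU (hmem ρ hρ θ))).comp_hasDerivAt ρ
      (hasDerivAt_circleMap_radius 0 ρ θ))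
  convert key.2.const_smul (2 * π)⁻¹ using 1
  · rfl
  rw [circleAverage_def, smul_comm, ← intervalIntegral.integral_smul]
  congr 2
  ext θ
  rw [eulerDeriv, show circleMap 0 r θ = r • circleMap 0 1 θ by simp [circleMap], map_smul,
    inv_smul_smul₀ hr]

theorem circleAverage_angularDeriv_eq_zero [CompleteSpace E] (hU : IsOpen U)
    (hf : ContDiffOn ℝ 1 f U) {r : ℝ} (hsph : sphere (0 : ℂ) |r| ⊆ U) :
    circleAverage (angularDeriv f) 0 r = 0 := by
  have hderiv (θ : ℝ) :
      HasDerivAt (fun θ => f (circleMap 0 r θ)) (angularDeriv f (circleMap 0 r θ)) θ := by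
    have hz := hsph (circleMap_mem_sphere' 0 r θ)
    exact ((hf.differentiableOn one_ne_zero _ hz).differentiableAt (hU.mem_nhds hz)).hasFDerivAt
      |>.comp_hasDerivAt θ (hasDerivAt_circleMap 0 r θ)
  have hint : CircleIntegrable (angularDeriv f) 0 r :=
    ((hf.angularDeriv (m := 0) hU (by norm_num)).continuousOn.mono hsph).circleIntegrable'
  rw [circleAverage_def,
    intervalIntegral.integral_eq_sub_of_hasDerivAt (fun θ _ => hderiv θ) hint]
  simpa [sub_eq_zero] using congrArg f (periodic_circleMap 0 r 0)

theorem polarCoord_symm_eq_circleMap (p : ℝ × ℝ) :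
    Complex.polarCoord.symm p = circleMap 0 p.1 p.2 := by
  simp [circleMap, exp_mul_I]

end Complex

theorem Real.sq_circleAverage_le {f : ℂ → ℝ} {c : ℂ} {R : ℝ} (hf : CircleIntegrable f c R)
    (hf₂ : CircleIntegrable (fun z => f z ^ 2) c R) :
    circleAverage f c R ^ 2 ≤ circleAverage (fun z => f z ^ 2) c R := by
  simp only [circleAverage_eq_intervalAverage]
  exact (even_two.convexOn_pow).map_set_average_le (continuous_pow 2).continuousOn isClosed_univ
    (by simp) (by simp [ENNReal.mul_eq_top]) (ae_of_all _ fun _ => mem_univ _)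
    (IntervalIntegrable.def' hf) (IntervalIntegrable.def' hf₂)

theorem Real.eqOn_zero_of_circleAverage_eq_zero {f : ℂ → ℝ} {c : ℂ} {R : ℝ}
    (hf : ContinuousOn f (sphere c |R|)) (hf₀ : ∀ z ∈ sphere c |R|, 0 ≤ f z)
    (h : circleAverage f c R = 0) : EqOn f 0 (sphere c |R|) := by
  have hg : Continuous fun θ => f (circleMap c R θ) :=
    hf.comp_continuous (continuous_circleMap c R) (circleMap_mem_sphere' c R)
  have hint : ∫ θ in 0..2 * π, f (circleMap c R θ) = 0 := by
    simpa [circleAverage_def, pi_ne_zero] using h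
  rw [intervalIntegral.integral_eq_zero_iff_of_nonneg_ae
    (ae_of_all _ fun θ => hf₀ _ (circleMap_mem_sphere' c R θ)) (hg.intervalIntegrable _ _),
    Ioc_eq_empty (not_lt.2 two_pi_pos.le), union_empty] at hint
  have hIoo : EqOn (fun θ => f (circleMap c R θ)) 0 (Ioo 0 (2 * π)) :=
    Measure.eqOn_open_of_ae_eq (ae_restrict_of_ae_restrict_of_subset Ioo_subset_Ioc_self hint)
      isOpen_Ioo hg.continuousOn continuousOn_const
  have hIcc := hIoo.of_subset_closure hg.continuousOn continuousOn_const Ioo_subset_Icc_self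
    (closure_Ioo two_pi_pos.ne).ge
  rw [← image_circleMap_Ioc]
  rintro _ ⟨θ, hθ, rfl⟩
  exact hIcc (Ioc_subset_Icc_self hθ)

theorem MonotoneOn.nonneg_of_sq_le_mul_of_integrableOn {B e : ℝ → ℝ} {R r : ℝ}
    (hB : MonotoneOn B (Ioo 0 R)) (he : IntegrableOn e (Ioo 0 R))
    (hsq : ∀ s ∈ Ioo 0 R, B s ^ 2 ≤ s * e s) (hr : r ∈ Ioo 0 R) : 0 ≤ B r := by
  by_contra! hneg
  have hbound (s : ℝ) (hs : s ∈ Ioo 0 r) : ‖B r ^ 2 * s⁻¹‖ ≤ e s := by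
    have hsR : s ∈ Ioo 0 R := ⟨hs.1, hs.2.trans hr.2⟩
    have hBs : B s ≤ B r := hB hsR hr hs.2.le
    rw [Real.norm_of_nonneg (by have := hs.1; positivity), ← div_eq_mul_inv, div_le_iff₀ hs.1]
    nlinarith [hsq s hsR]
  have hinv : IntegrableOn (fun s => B r ^ 2 * s⁻¹) (Ioo 0 r) :=
    (he.mono_set (Ioo_subset_Ioo_right hr.2.le)).mono' (by fun_prop)
      (ae_restrict_of_forall_mem measurableSet_Ioo hbound)
  have : IntervalIntegrable (fun s => s⁻¹) volume 0 r := by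
    rw [intervalIntegrable_iff_integrableOn_Ioo_of_le hr.1.le]
    refine IntegrableOn.congr_fun (hinv.const_mul (B r ^ 2)⁻¹) (fun s _ => ?_) measurableSet_Ioo
    rw [← mul_assoc, inv_mul_cancel₀ (pow_ne_zero 2 hneg.ne), one_mul]
  simp [intervalIntegrable_inv_iff, hr.1.ne] at this

namespace Complex

theorem integrableOn_mul_circleAverage {g : ℂ → ℝ} (hg : Integrable g) :
    IntegrableOn (fun r => r * circleAverage g 0 r) (Ioi 0) := by
  have hpolar : IntegrableOn (fun p : ℝ × ℝ => p.1 * g (circleMap 0 p.1 p.2))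
      polarCoord.target := by
    have hg' : IntegrableOn (g ∘ measurableEquivRealProd.symm)
        (polarCoord.symm '' polarCoord.target) :=
      ((volume_preserving_equiv_real_prod.symm.integrable_comp_emb
        measurableEquivRealProd.symm.measurableEmbedding).2 hg).integrableOn
    refine ((integrableOn_image_iff_integrableOn_abs_det_fderiv_smul volume
      polarCoord.open_target.measurableSet
      (fun p _ => (hasFDerivAt_polarCoord_symm p).hasFDerivWithinAt)
      polarCoord.symm.injOn _).1 hg').congr_fun (fun p hp => ?_)
      polarCoord.open_target.measurableSet
    dsimp only [Function.comp_apply]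
    rw [measurableEquivRealProd_symm_polarCoord_symm_apply,
      polarCoord_symm_eq_circleMap, det_fderivPolarCoordSymm,
      abs_of_pos (show 0 < p.1 from hp.1), smul_eq_mul]
  have hprod : Integrable (fun p : ℝ × ℝ => p.1 * g (circleMap 0 p.1 p.2))
      ((volume.restrict (Ioi 0)).prod (volume.restrict (Ioo (-π) π))) := by
    rwa [Measure.prod_restrict, ← Measure.volume_eq_prod]
  refine IntegrableOn.congr_fun (hprod.integral_prod_left.const_mul (2 * π)⁻¹)
    (fun r _ => ?_) measurableSet_Ioi
  have hper : ∫ θ in (-π)..π, g (circleMap 0 r θ) = ∫ θ in 0..2 * π, g (circleMap 0 r θ) := by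
    have := ((periodic_circleMap 0 r).comp g).intervalIntegral_add_eq (-π) 0
    rwa [show -π + 2 * π = π by ring, zero_add] at this
  simp only [circleAverage_def, smul_eq_mul, integral_const_mul, ← hper,
    intervalIntegral.integral_of_le (neg_le_self pi_pos.le), integral_Ioc_eq_integral_Ioo]
  ring

theorem circleAverage_eulerDeriv_eulerDeriv_nonneg {w : ℂ → ℝ} (hU : IsOpen U)
    (hw : ContDiffOn ℝ 2 w U) {r : ℝ} (hsph : sphere (0 : ℂ) |r| ⊆ U)
    (hlap : ∀ z ∈ sphere (0 : ℂ) |r|, 0 ≤ lap w z) :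
    0 ≤ circleAverage (eulerDeriv (eulerDeriv w)) 0 r := by
  have hEE : ContinuousOn (eulerDeriv (eulerDeriv w)) U :=
    ((hw.eulerDeriv (m := 1) hU (by norm_num)).eulerDeriv (m := 0) hU (by norm_num)).continuousOn
  have hΘΘ : ContinuousOn (angularDeriv (angularDeriv w)) U :=
    ((hw.angularDeriv (m := 1) hU (by norm_num)).angularDeriv (m := 0) hU
      (by norm_num)).continuousOn
  have hpolar : EqOn (eulerDeriv (eulerDeriv w) + angularDeriv (angularDeriv w))
      (fun z => ‖z‖ ^ 2 * lap w z) (sphere 0 |r|) := fun z hz =>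
    eulerDeriv_eulerDeriv_add_angularDeriv_angularDeriv <|
      ((hw.fderiv_of_isOpen (m := 1) hU (by norm_num)).differentiableOn one_ne_zero z
        (hsph hz)).differentiableAt (hU.mem_nhds (hsph hz))
  have hΘ : circleAverage (angularDeriv (angularDeriv w)) 0 r = 0 :=
    circleAverage_angularDeriv_eq_zero hU (hw.angularDeriv hU (by norm_num)) hsph
  have hsum :=
    circleAverage_add (hEE.mono hsph).circleIntegrable' (hΘΘ.mono hsph).circleIntegrable'
  rw [hΘ, add_zero, circleAverage_congr_sphere hpolar] at hsum
  rw [← hsum]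
  exact circleAverage_nonneg_of_nonneg fun z hz => mul_nonneg (sq_nonneg _) (hlap z hz)

theorem monotoneOn_circleAverage_of_eulerDeriv_nonneg {f : ℂ → ℝ} {D : Set ℝ}
    (hU : IsOpen U) (hf : ContDiffOn ℝ 1 f U) (hD : Convex ℝ D)
    (hDU : ∀ r ∈ interior D, 0 < r ∧ sphere (0 : ℂ) |r| ⊆ U)
    (hcont : ContinuousOn (circleAverage f 0) D)
    (hflux : ∀ r ∈ interior D, 0 ≤ circleAverage (eulerDeriv f) 0 r) :
    MonotoneOn (circleAverage f 0) D := by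
  refine monotoneOn_of_hasDerivWithinAt_nonneg hD hcont (fun r hr => ?_)
    (fun r hr => smul_nonneg (inv_nonneg.2 (hDU r hr).1.le) (hflux r hr))
  obtain ⟨hr₀, hsph⟩ := hDU r hr
  exact (hasDerivAt_circleAverage_radius hU hf hr₀.ne' hsph).hasDerivWithinAt

theorem sq_circleAverage_eulerDeriv_le {w : ℂ → ℝ} {r : ℝ}
    (hw : ContinuousOn (fderiv ℝ w) (sphere 0 |r|)) :
    circleAverage (eulerDeriv w) 0 r ^ 2
      ≤ r * (r * circleAverage (fun z => pdX w z ^ 2 + pdY w z ^ 2) 0 r) := by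
  have hE : ContinuousOn (eulerDeriv w) (sphere 0 |r|) := hw.clm_apply continuousOn_id
  have hX : ContinuousOn (pdX w) (sphere 0 |r|) := hw.clm_apply continuousOn_const
  have hY : ContinuousOn (pdY w) (sphere 0 |r|) := hw.clm_apply continuousOn_const
  calc circleAverage (eulerDeriv w) 0 r ^ 2
      ≤ circleAverage (fun z => eulerDeriv w z ^ 2) 0 r :=
        sq_circleAverage_le hE.circleIntegrable' (hE.pow 2).circleIntegrable'
    _ ≤ circleAverage (fun z => r ^ 2 * (pdX w z ^ 2 + pdY w z ^ 2)) 0 r := by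
        refine circleAverage_mono (hE.pow 2).circleIntegrable'
          (continuousOn_const.mul ((hX.pow 2).add (hY.pow 2))).circleIntegrable' fun z hz => ?_
        have := sq_apply_le_sq_norm_mul (fderiv ℝ w z) z
        rwa [mem_sphere_zero_iff_norm.1 hz, sq_abs] at this
    _ = r * (r * circleAverage (fun z => pdX w z ^ 2 + pdY w z ^ 2) 0 r) := by
        simp only [← smul_eq_mul (a := r ^ 2), circleAverage_fun_smul]
        ring

theorem isOpen_setOf_lt_norm_and_norm_lt (a b : ℝ) : IsOpen {z : ℂ | a < ‖z‖ ∧ ‖z‖ < b} :=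
  (isOpen_lt continuous_const continuous_norm).inter (isOpen_lt continuous_norm continuous_const)

theorem sphere_subset_setOf_lt_norm_and_norm_lt {a b r : ℝ} (ha : 0 ≤ a) (hr : r ∈ Ioo a b) :
    sphere (0 : ℂ) |r| ⊆ {z : ℂ | a < ‖z‖ ∧ ‖z‖ < b} := fun z hz => by
  rw [mem_sphere_zero_iff_norm, abs_of_pos (ha.trans_lt hr.1)] at hz
  exact ⟨hz ▸ hr.1, hz ▸ hr.2⟩

theorem monotoneOn_circleAverage_eulerDeriv {w : ℂ → ℝ} {a b : ℝ} (ha : 0 ≤ a)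
    (hw : ContDiffOn ℝ 2 w {z : ℂ | a < ‖z‖ ∧ ‖z‖ < b})
    (hlap : ∀ z : ℂ, a < ‖z‖ → ‖z‖ < b → 0 ≤ lap w z) :
    MonotoneOn (circleAverage (eulerDeriv w) 0) (Ioo a b) := by
  have hU := isOpen_setOf_lt_norm_and_norm_lt a b
  have hsph (r : ℝ) (hr : r ∈ Ioo a b) := sphere_subset_setOf_lt_norm_and_norm_lt ha hr
  have hcont : ContinuousOn (circleAverage (eulerDeriv w) 0) (Ioo a b) :=
    ContinuousOn.circleAverage
      ((hw.eulerDeriv (m := 0) hU (by norm_num)).continuousOn.mono fun z hz => by simpa using hz)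
      fun r hr => ha.trans hr.1.le
  refine monotoneOn_circleAverage_of_eulerDeriv_nonneg hU (hw.eulerDeriv hU (by norm_num))
    (convex_Ioo a b) ?_ hcont ?_ <;> rw [interior_Ioo]
  · exact fun r hr => ⟨ha.trans_lt hr.1, hsph r hr⟩
  · exact fun r hr => circleAverage_eulerDeriv_eulerDeriv_nonneg hU hw (hsph r hr)
      fun z hz => (hsph r hr hz).elim (hlap z)

theorem circleAverage_eulerDeriv_nonneg_of_integrableOn {w : ℂ → ℝ} {R : ℝ}
    (hw : ContDiffOn ℝ 2 w {z : ℂ | 0 < ‖z‖ ∧ ‖z‖ < R})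
    (hlap : ∀ z : ℂ, 0 < ‖z‖ → ‖z‖ < R → 0 ≤ lap w z)
    (henergy : IntegrableOn (fun z => pdX w z ^ 2 + pdY w z ^ 2) {z : ℂ | 0 < ‖z‖ ∧ ‖z‖ < R})
    {r : ℝ} (hr : r ∈ Ioo 0 R) : 0 ≤ circleAverage (eulerDeriv w) 0 r := by
  have hU := isOpen_setOf_lt_norm_and_norm_lt 0 R
  have hsph (s : ℝ) (hs : s ∈ Ioo 0 R) := sphere_subset_setOf_lt_norm_and_norm_lt le_rfl hs
  have henergy' : IntegrableOn
      (fun r => r * circleAverage (fun z => pdX w z ^ 2 + pdY w z ^ 2) 0 r) (Ioo 0 R) := by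
    refine ((integrableOn_mul_circleAverage
      (henergy.integrable_indicator hU.measurableSet)).mono_set Ioo_subset_Ioi_self).congr_fun
      (fun r hr => ?_) measurableSet_Ioo
    exact congrArg (r * ·)
      (circleAverage_congr_sphere fun z hz => indicator_of_mem (hsph r hr hz) _)
  exact (monotoneOn_circleAverage_eulerDeriv le_rfl hw hlap).nonneg_of_sq_le_mul_of_integrableOn
    henergy' (fun s hs => sq_circleAverage_eulerDeriv_le
      ((hw.continuousOn_fderiv_of_isOpen hU one_le_two).mono (hsph s hs))) hr

end Complex

open Complex in
/-- A nonnegative subharmonic function of finite energy on the punctured unit disk,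
vanishing on the exterior boundary circle, is identically zero. -/
theorem statement0 (w : ℂ → ℝ)
    (hC2 : ContDiffOn ℝ 2 w {z : ℂ | 0 < ‖z‖ ∧ ‖z‖ < 1})
    (hsub : ∀ z : ℂ, 0 < ‖z‖ → ‖z‖ < 1 → 0 ≤ lap w z)
    (hnonneg : ∀ z : ℂ, 0 < ‖z‖ → ‖z‖ < 1 → 0 ≤ w z)
    (hcont : ContinuousOn w {z : ℂ | 0 < ‖z‖ ∧ ‖z‖ ≤ 1})
    (hbdry : ∀ z : ℂ, ‖z‖ = 1 → w z = 0)
    (henergy : IntegrableOn (fun z => pdX w z ^ 2 + pdY w z ^ 2)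
      {z : ℂ | 0 < ‖z‖ ∧ ‖z‖ < 1})
    (z : ℂ) (hz0 : 0 < ‖z‖) (hz1 : ‖z‖ < 1) :
    w z = 0 := by
  have hsph (r : ℝ) (hr : r ∈ Ioo 0 1) := sphere_subset_setOf_lt_norm_and_norm_lt le_rfl hr
  have hmean_cont : ContinuousOn (circleAverage w 0) (Ioc 0 1) :=
    ContinuousOn.circleAverage (hcont.mono fun ζ hζ => by simpa using hζ) fun r hr => hr.1.le
  have hmean_mono : MonotoneOn (circleAverage w 0) (Ioc 0 1) := by
    refine monotoneOn_circleAverage_of_eulerDeriv_nonneg (isOpen_setOf_lt_norm_and_norm_lt 0 1)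
      (hC2.of_le one_le_two) (convex_Ioc 0 1) ?_ hmean_cont ?_ <;> rw [interior_Ioc]
    · exact fun r hr => ⟨hr.1, hsph r hr⟩
    · exact fun r hr => circleAverage_eulerDeriv_nonneg_of_integrableOn hC2 hsub henergy hr
  have hw_sphere (ζ : ℂ) (hζ : ζ ∈ sphere 0 |‖z‖|) : 0 ≤ w ζ :=
    (hsph _ ⟨hz0, hz1⟩ hζ).elim (hnonneg ζ)
  have hmean : circleAverage w 0 ‖z‖ = 0 := by
    refine le_antisymm ?_ (circleAverage_nonneg_of_nonneg hw_sphere)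
    calc circleAverage w 0 ‖z‖ ≤ circleAverage w 0 1 :=
          hmean_mono ⟨hz0, hz1.le⟩ ⟨one_pos, le_rfl⟩ hz1.le
      _ = 0 := circleAverage_const_on_circle fun ζ hζ => hbdry ζ (by simpa using hζ)
  exact eqOn_zero_of_circleAverage_eq_zero (hC2.continuousOn.mono (hsph _ ⟨hz0, hz1⟩))
    hw_sphere hmean (by simp)
end

section
/- Let w : ℝ × [0,∞) → ℝ be continuous, 2π-periodic in the first variable x, nonnegative, C² on the open half-cylinder ℝ × (0,∞) with Δw = w_xx + w_yy ≥ 0 there, with w(x,0) = 0 for all x, and with finite Dirichlet energy ∫_{(0,2π)×(0,∞)} |∇w|² dx dy < ∞. Then w ≡ 0. -/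
/-!
Let `A y = ∫₀^{2π} w (x, y) dx` and `B y = ∫₀^{2π} w_y (x, y) dx`, so that `A' = B`. By
periodicity `∫ w_xx dx = 0`, hence `B' = ∫ w_yy dx ≥ 0` and `B` is nondecreasing. If `B y₁ > 0`,
Cauchy–Schwarz gives `∫ w_y (x, y) ^ 2 dx ≥ B y₁ ^ 2 / 2π` for every `y > y₁`, contradicting finite
energy. So `B ≤ 0`, `A` is nonincreasing from `A 0 = 0`, and `A ≥ 0` forces `A = 0`: each
horizontal slice of `w` is a nonnegative continuous function with zero mean.
-/

open MeasureTheory Real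

/-- Partial derivative in the first variable. -/
noncomputable def pX (u : ℝ × ℝ → ℝ) (p : ℝ × ℝ) : ℝ := deriv (fun t => u (t, p.2)) p.1

/-- Partial derivative in the second variable. -/
noncomputable def pY (u : ℝ × ℝ → ℝ) (p : ℝ × ℝ) : ℝ := deriv (fun t => u (p.1, t)) p.2

/-- Second partial derivative in the first variable. -/
noncomputable def pXX (u : ℝ × ℝ → ℝ) (p : ℝ × ℝ) : ℝ := deriv (fun t => pX u (t, p.2)) p.1

/-- Second partial derivative in the second variable. -/
noncomputable def pYY (u : ℝ × ℝ → ℝ) (p : ℝ × ℝ) : ℝ := deriv (fun t => pY u (p.1, t)) p.2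

open Set Function

section PartialDerivatives

variable {u : ℝ × ℝ → ℝ} {p : ℝ × ℝ}

lemma hasDerivAt_fderiv_fst (h : DifferentiableAt ℝ u p) :
    HasDerivAt (fun t => u (t, p.2)) (fderiv ℝ u p (1, 0)) p.1 :=
  h.hasFDerivAt.comp_hasDerivAt p.1 ((hasDerivAt_id p.1).prodMk (hasDerivAt_const p.1 p.2))

lemma hasDerivAt_fderiv_snd (h : DifferentiableAt ℝ u p) :
    HasDerivAt (fun t => u (p.1, t)) (fderiv ℝ u p (0, 1)) p.2 :=
  h.hasFDerivAt.comp_hasDerivAt p.2 ((hasDerivAt_const p.2 p.1).prodMk (hasDerivAt_id p.2))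

lemma hasDerivAt_pX (h : DifferentiableAt ℝ u p) : HasDerivAt (fun t => u (t, p.2)) (pX u p) p.1 :=
  (hasDerivAt_fderiv_fst h).differentiableAt.hasDerivAt

lemma hasDerivAt_pY (h : DifferentiableAt ℝ u p) : HasDerivAt (fun t => u (p.1, t)) (pY u p) p.2 :=
  (hasDerivAt_fderiv_snd h).differentiableAt.hasDerivAt

variable {U : Set (ℝ × ℝ)} {m n : WithTop ℕ∞}

lemma contDiffOn_pX (hU : IsOpen U) (hu : ContDiffOn ℝ m u U) (hmn : n + 1 ≤ m) :
    ContDiffOn ℝ n (pX u) U :=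
  ((hu.fderiv_of_isOpen hU hmn).clm_apply contDiffOn_const).congr fun _ hq =>
    (hasDerivAt_fderiv_fst (((hu.of_le (le_add_self.trans hmn)).differentiableOn
      one_ne_zero).differentiableAt (hU.mem_nhds hq))).deriv

lemma contDiffOn_pY (hU : IsOpen U) (hu : ContDiffOn ℝ m u U) (hmn : n + 1 ≤ m) :
    ContDiffOn ℝ n (pY u) U :=
  ((hu.fderiv_of_isOpen hU hmn).clm_apply contDiffOn_const).congr fun _ hq =>
    (hasDerivAt_fderiv_snd (((hu.of_le (le_add_self.trans hmn)).differentiableOn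
      one_ne_zero).differentiableAt (hU.mem_nhds hq))).deriv

lemma continuousOn_pXX (hU : IsOpen U) (hu : ContDiffOn ℝ 2 u U) : ContinuousOn (pXX u) U :=
  (contDiffOn_pX (n := 0) hU (contDiffOn_pX (n := 1) hU hu (by norm_num))
    (by norm_num)).continuousOn

lemma continuousOn_pYY (hU : IsOpen U) (hu : ContDiffOn ℝ 2 u U) : ContinuousOn (pYY u) U :=
  (contDiffOn_pY (n := 0) hU (contDiffOn_pY (n := 1) hU hu (by norm_num))
    (by norm_num)).continuousOn

lemma pX_add_period {L : ℝ} (hper : ∀ x y, u (x + L, y) = u (x, y)) (x y : ℝ) :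
    pX u (x + L, y) = pX u (x, y) := by
  change deriv (fun t => u (t, y)) (x + L) = deriv (fun t => u (t, y)) x
  rw [← deriv_comp_add_const]
  simp only [hper]

end PartialDerivatives

lemma ContinuousOn.continuous_slice {g : ℝ × ℝ → ℝ} {s : Set (ℝ × ℝ)} (hg : ContinuousOn g s)
    {y : ℝ} (hy : ∀ x, (x, y) ∈ s) : Continuous fun x => g (x, y) :=
  hg.comp_continuous (continuous_id.prodMk continuous_const) hy

lemma isOpen_setOf_snd_pos : IsOpen {p : ℝ × ℝ | 0 < p.2} :=
  isOpen_lt continuous_const continuous_snd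

section Slices

variable {u : ℝ × ℝ → ℝ}

lemma hasDerivAt_intervalIntegral_snd (hu : ContDiffOn ℝ 1 u {p : ℝ × ℝ | 0 < p.2}) (a b : ℝ)
    {y : ℝ} (hy : 0 < y) :
    HasDerivAt (fun s => ∫ x in a..b, u (x, s)) (∫ x in a..b, pY u (x, y)) y := by
  have hu' : ContinuousOn (pY u) {p : ℝ × ℝ | 0 < p.2} :=
    (contDiffOn_pY (n := 0) isOpen_setOf_snd_pos hu (by norm_num)).continuousOn
  have hball : ∀ t ∈ Metric.ball y (y / 2), t ∈ Icc (y / 2) (y + y / 2) := fun t ht => by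
    rw [Metric.mem_ball, Real.dist_eq, abs_sub_lt_iff] at ht
    constructor <;> linarith
  have hpos : ∀ t ∈ Icc (y / 2) (y + y / 2), 0 < t := fun t ht => by linarith [ht.1]
  obtain ⟨M, hM⟩ := (isCompact_uIcc.prod isCompact_Icc).exists_bound_of_continuousOn
    (hu'.mono fun q hq => hpos q.2 (mem_prod.1 hq).2)
  refine (intervalIntegral.hasDerivAt_integral_of_dominated_loc_of_deriv_le
    (F := fun s x => u (x, s)) (F' := fun s x => pY u (x, s)) (μ := volume) (bound := fun _ => M)
    (Metric.ball_mem_nhds y (half_pos hy)) ?_ ?_ ?_ ?_ intervalIntegrable_const ?_).2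
  · filter_upwards [eventually_gt_nhds hy] with t ht
    exact (hu.continuousOn.continuous_slice fun _ => ht).aestronglyMeasurable
  · exact (hu.continuousOn.continuous_slice fun _ => hy).intervalIntegrable _ _
  · exact (hu'.continuous_slice fun _ => hy).aestronglyMeasurable
  · exact ae_of_all _ fun x hx t ht => hM (x, t) ⟨uIoc_subset_uIcc hx, hball t ht⟩
  · exact ae_of_all _ fun x _ t ht => hasDerivAt_pY (p := (x, t))
      ((hu.differentiableOn one_ne_zero).differentiableAt
        (isOpen_setOf_snd_pos.mem_nhds (hpos t (hball t ht))))

lemma continuousOn_intervalIntegral_snd (hu : ContinuousOn u {p : ℝ × ℝ | 0 ≤ p.2}) (a b : ℝ) :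
    ContinuousOn (fun y => ∫ x in a..b, u (x, y)) (Ici 0) := by
  have hv : Continuous (uncurry fun y x => u (x, max y 0)) :=
    hu.comp_continuous (continuous_snd.prodMk (continuous_fst.max continuous_const))
      fun q => le_max_right q.1 0
  refine (intervalIntegral.continuous_parametric_intervalIntegral_of_continuous' (μ := volume)
    hv a b).continuousOn.congr fun y (hy : 0 ≤ y) => ?_
  simp only [max_eq_left hy]

variable {L : ℝ}

lemma intervalIntegral_pXX_eq_zero (hu : ContDiffOn ℝ 2 u {p : ℝ × ℝ | 0 < p.2})
    (hper : ∀ x y, u (x + L, y) = u (x, y)) {y : ℝ} (hy : 0 < y) :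
    ∫ x in 0..L, pXX u (x, y) = 0 := by
  have hH := isOpen_setOf_snd_pos
  have huX : ContDiffOn ℝ 1 (pX u) {p : ℝ × ℝ | 0 < p.2} := contDiffOn_pX hH hu (by norm_num)
  change ∫ x in 0..L, pX (pX u) (x, y) = 0
  rw [intervalIntegral.integral_eq_sub_of_hasDerivAt (f := fun t => pX u (t, y))
    (fun x _ => hasDerivAt_pX ((huX.differentiableOn one_ne_zero).differentiableAt
      (hH.mem_nhds (show 0 < (x, y).2 from hy))))
    (((continuousOn_pXX hH hu).continuous_slice fun _ => hy).intervalIntegrable _ _)]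
  simpa [sub_eq_zero] using pX_add_period hper 0 y

lemma intervalIntegral_pYY_nonneg (hL : 0 ≤ L) (hu : ContDiffOn ℝ 2 u {p : ℝ × ℝ | 0 < p.2})
    (hper : ∀ x y, u (x + L, y) = u (x, y))
    (hsub : ∀ p : ℝ × ℝ, 0 < p.2 → 0 ≤ pXX u p + pYY u p) {y : ℝ} (hy : 0 < y) :
    0 ≤ ∫ x in 0..L, pYY u (x, y) := by
  have hH := isOpen_setOf_snd_pos
  have hΔ : 0 ≤ ∫ x in 0..L, (pXX u (x, y) + pYY u (x, y)) :=
    intervalIntegral.integral_nonneg hL fun x _ => hsub (x, y) hy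
  rwa [intervalIntegral.integral_add
    (((continuousOn_pXX hH hu).continuous_slice fun _ => hy).intervalIntegrable _ _)
    (((continuousOn_pYY hH hu).continuous_slice fun _ => hy).intervalIntegrable _ _),
    intervalIntegral_pXX_eq_zero hu hper hy, zero_add] at hΔ

end Slices

lemma sq_intervalIntegral_le_mul_intervalIntegral_sq {f : ℝ → ℝ} {a b : ℝ} (hab : a ≤ b)
    (hf : IntervalIntegrable f volume a b)
    (hf2 : IntervalIntegrable (fun x => f x ^ 2) volume a b) :
    (∫ x in a..b, f x) ^ 2 ≤ (b - a) * ∫ x in a..b, f x ^ 2 := by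
  rcases hab.eq_or_lt with rfl | hlt
  · simp
  set I := ∫ x in a..b, f x
  set ε := I / (b - a)
  have hba : 0 < b - a := sub_pos.2 hlt
  -- integrate `2 ε f - ε ^ 2 ≤ f ^ 2`, i.e. `0 ≤ (f - ε) ^ 2`, with `ε` the mean of `f`
  have hmono := intervalIntegral.integral_mono_on hab ((hf.const_mul (2 * ε)).sub
    (intervalIntegrable_const (c := ε ^ 2))) hf2 fun x _ => by nlinarith [sq_nonneg (f x - ε)]
  rw [intervalIntegral.integral_sub (hf.const_mul _) intervalIntegrable_const,
    intervalIntegral.integral_const_mul, intervalIntegral.integral_const, smul_eq_mul] at hmono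
  have hI : 2 * ε * I - (b - a) * ε ^ 2 = I ^ 2 / (b - a) := by
    simp only [ε]; field_simp; ring
  rw [hI, div_le_iff₀ hba] at hmono
  linarith

lemma exists_setIntegral_slice_lt_of_integrableOn_prod_Ioi {F : ℝ × ℝ → ℝ} {s : Set ℝ}
    {c κ : ℝ} (hF : IntegrableOn F (s ×ˢ Ioi c)) (hκ : 0 < κ) :
    ∃ y > c, ∫ x in s, F (x, y) < κ := by
  by_contra! hge
  rw [IntegrableOn, Measure.volume_eq_prod, ← Measure.prod_restrict] at hF
  have hfin := hF.integral_prod_right.measure_norm_ge_lt_top hκ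
  refine hfin.ne (top_unique ?_)
  calc (⊤ : ENNReal) = volume.restrict (Ioi c) (Ioi c) := by
        rw [Measure.restrict_apply measurableSet_Ioi, inter_self, Real.volume_Ioi]
    _ ≤ _ := measure_mono fun y hy => (hge y hy).trans (le_abs_self _)

lemma intervalIntegral_slice_nonpos_of_monotoneOn {g : ℝ × ℝ → ℝ} {a b : ℝ} (hab : a < b)
    (hg : ContinuousOn g {p : ℝ × ℝ | 0 < p.2})
    (hg2 : IntegrableOn (fun q => g q ^ 2) (Ioo a b ×ˢ Ioi 0))
    (hmono : MonotoneOn (fun y => ∫ x in a..b, g (x, y)) (Ioi 0)) {y : ℝ} (hy : 0 < y) :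
    ∫ x in a..b, g (x, y) ≤ 0 := by
  by_contra! hpos
  set c := ∫ x in a..b, g (x, y)
  obtain ⟨y', hy', hsmall⟩ := exists_setIntegral_slice_lt_of_integrableOn_prod_Ioi
    (hg2.mono_set (prod_mono_right (Ioi_subset_Ioi hy.le)))
    (div_pos (pow_pos hpos 2) (sub_pos.2 hab))
  have hcont : Continuous fun x => g (x, y') := hg.continuous_slice fun _ => hy.trans hy'
  have hc : c ≤ ∫ x in a..b, g (x, y') := hmono hy (hy.trans hy') hy'.le
  have hCS := sq_intervalIntegral_le_mul_intervalIntegral_sq hab.le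
    (hcont.intervalIntegrable a b) ((hcont.pow 2).intervalIntegrable a b)
  rw [setIntegral_congr_set Ioo_ae_eq_Ioc, ← intervalIntegral.integral_of_le hab.le,
    lt_div_iff₀ (sub_pos.2 hab)] at hsmall
  nlinarith [pow_le_pow_left₀ hpos.le hc 2]

lemma integrableOn_sq_right_of_sq_add_sq {f g : ℝ × ℝ → ℝ} {s : Set (ℝ × ℝ)}
    (hs : MeasurableSet s) (hg : ContinuousOn g s)
    (h : IntegrableOn (fun q => f q ^ 2 + g q ^ 2) s) :
    IntegrableOn (fun q => g q ^ 2) s :=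
  h.mono' ((hg.pow 2).aestronglyMeasurable hs) <| (ae_restrict_iff' hs).2 <| ae_of_all _
    fun q _ => by rw [Real.norm_of_nonneg (sq_nonneg _)]; nlinarith [sq_nonneg (f q)]

lemma Function.Periodic.eq_zero_of_intervalIntegral_eq_zero {f : ℝ → ℝ} {L : ℝ}
    (hf : Periodic f L) (hL : 0 < L) (hc : Continuous f) (hnonneg : ∀ x, 0 ≤ f x)
    (hint : ∫ x in 0..L, f x = 0) (x : ℝ) : f x = 0 := by
  obtain ⟨z, hz, hxz⟩ := hf.exists_mem_Ico₀ hL x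
  rw [hxz]
  by_contra hne
  exact (intervalIntegral.integral_pos hL hc.continuousOn (fun x _ => hnonneg x)
    ⟨z, Ico_subset_Icc_self hz, (hnonneg z).lt_of_ne' hne⟩).ne' hint

/-- A nonnegative subharmonic function of finite energy on the half-cylinder,
vanishing on the boundary circle, is identically zero. -/
theorem statement1 (w : ℝ × ℝ → ℝ)
    (hcont : ContinuousOn w {p : ℝ × ℝ | 0 ≤ p.2})
    (hper : ∀ x y : ℝ, w (x + 2 * π, y) = w (x, y))
    (hnonneg : ∀ p : ℝ × ℝ, 0 ≤ p.2 → 0 ≤ w p)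
    (hC2 : ContDiffOn ℝ 2 w {p : ℝ × ℝ | 0 < p.2})
    (hsub : ∀ p : ℝ × ℝ, 0 < p.2 → 0 ≤ pXX w p + pYY w p)
    (hbdry : ∀ x : ℝ, w (x, 0) = 0)
    (henergy : IntegrableOn (fun p => pX w p ^ 2 + pY w p ^ 2)
      (Set.Ioo (0 : ℝ) (2 * π) ×ˢ Set.Ioi (0 : ℝ)))
    (p : ℝ × ℝ) (hp : 0 ≤ p.2) : w p = 0 := by
  have hπ : 0 < 2 * π := by positivity
  have hwY : ContDiffOn ℝ 1 (pY w) {p : ℝ × ℝ | 0 < p.2} :=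
    contDiffOn_pY isOpen_setOf_snd_pos hC2 (by norm_num)
  have hmono : MonotoneOn (fun y => ∫ x in 0..2 * π, pY w (x, y)) (Ioi 0) := by
    refine monotoneOn_of_hasDerivWithinAt_nonneg (convex_Ioi 0)
      (f' := fun y => ∫ x in 0..2 * π, pYY w (x, y))
      (fun y hy => (hasDerivAt_intervalIntegral_snd hwY _ _ hy).continuousAt.continuousWithinAt)
      (fun y hy => ?_) fun y hy => ?_ <;> rw [interior_Ioi] at hy
    · exact (hasDerivAt_intervalIntegral_snd hwY _ _ hy).hasDerivWithinAt
    · exact intervalIntegral_pYY_nonneg hπ.le hC2 hper hsub hy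
  have hflux : ∀ y, 0 < y → ∫ x in 0..2 * π, pY w (x, y) ≤ 0 := fun y hy =>
    intervalIntegral_slice_nonpos_of_monotoneOn hπ hwY.continuousOn
      (integrableOn_sq_right_of_sq_add_sq (measurableSet_Ioo.prod measurableSet_Ioi)
        (hwY.continuousOn.mono fun q hq => (mem_prod.1 hq).2) henergy) hmono hy
  have hanti : AntitoneOn (fun y => ∫ x in 0..2 * π, w (x, y)) (Ici 0) := by
    refine antitoneOn_of_hasDerivWithinAt_nonpos (convex_Ici 0)
      (f' := fun y => ∫ x in 0..2 * π, pY w (x, y))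
      (continuousOn_intervalIntegral_snd hcont _ _) (fun y hy => ?_) fun y hy => ?_ <;>
      rw [interior_Ici] at hy
    · exact (hasDerivAt_intervalIntegral_snd (hC2.of_le (by norm_num)) _ _ hy).hasDerivWithinAt
    · exact hflux y hy
  have hmean : ∫ x in 0..2 * π, w (x, p.2) = 0 := by
    refine le_antisymm ?_ (intervalIntegral.integral_nonneg hπ.le fun x _ => hnonneg (x, p.2) hp)
    simpa [hbdry] using hanti self_mem_Ici hp hp
  exact Periodic.eq_zero_of_intervalIntegral_eq_zero (fun x => hper x p.2) hπ
    (hcont.continuous_slice fun _ => hp) (fun x => hnonneg (x, p.2) hp) hmean p.1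
end

section
/- Let N be a nilpotent real r×r matrix and Y a real diagonal r×r matrix with [N,Y] = 2N, and define H(x,y) = exp(x·Nᵀ)·exp((log y)·Y)·exp(x·N) for x ∈ ℝ, y > 0. Then for all x ∈ ℝ and y > 0, y²·[ tr((H⁻¹·∂H/∂x)²) + tr((H⁻¹·∂H/∂y)²) ] = 2·tr(Nᵀ·N) + tr(Y²). In particular, the energy density of the local model map, measured with the hyperbolic metric on the domain and the invariant metric on positive definite symmetric matrices, is constant. -/
open Matrix

/-- The local model metric `H(x,y) = exp(x Nᵀ) exp((log y) Y) exp(x N)`. -/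
noncomputable def Hmod {r : ℕ} (N Y : Matrix (Fin r) (Fin r) ℝ) (x y : ℝ) :
    Matrix (Fin r) (Fin r) ℝ :=
  NormedSpace.exp (x • Nᵀ) * NormedSpace.exp (Real.log y • Y) * NormedSpace.exp (x • N)

/-- Partial derivative of the local model metric in `x`, entrywise. -/
noncomputable def HmodX {r : ℕ} (N Y : Matrix (Fin r) (Fin r) ℝ) (x y : ℝ) :
    Matrix (Fin r) (Fin r) ℝ :=
  Matrix.of fun a b => deriv (fun t => Hmod N Y t y a b) x

/-- Partial derivative of the local model metric in `y`, entrywise. -/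
noncomputable def HmodY {r : ℕ} (N Y : Matrix (Fin r) (Fin r) ℝ) (x y : ℝ) :
    Matrix (Fin r) (Fin r) ℝ :=
  Matrix.of fun a b => deriv (fun t => Hmod N Y x t a b) y

/-!
Write `F = exp (x N)` and `C = exp ((log y) Y)`, so that `H = exp (x Nᵀ) C F`. Transposing the
bracket relation gives `[Y, Nᵀ] = 2 Nᵀ`, so `Nᵀ` is an eigenvector of `ad Y` and conjugation by `C`
rescales it: `C Nᵀ = y² Nᵀ C`. Hence `H⁻¹ ∂ₓH = F⁻¹ (y⁻² Nᵀ + N) F` and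
`H⁻¹ ∂ᵧH = F⁻¹ (y⁻¹ Y) F`. Traces of squares are invariant under conjugation, and
`tr (N²) = tr ((Nᵀ)²) = 0` by nilpotency, which leaves `y⁻² (2 tr (Nᵀ N) + tr (Y²))`.
-/

open NormedSpace

section BanachAlgebra

variable {𝔸 : Type*} [NormedRing 𝔸] [NormedAlgebra ℝ 𝔸] [CompleteSpace 𝔸]

theorem exp_smul_mul_of_commutator_eq_smul {a z : 𝔸} {c : ℝ} (h : z * a - a * z = c • a)
    (t : ℝ) : exp (t • z) * a = Real.exp (c * t) • (a * exp (t • z)) := by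
  let : NormedAlgebra ℚ 𝔸 := NormedAlgebra.restrictScalars ℚ ℝ 𝔸
  have haz : a * z = z * a - c • a := by rw [← h, sub_sub_cancel]
  have hsc : SemiconjBy a (t • z + algebraMap ℝ 𝔸 (c * t)) (t • z) := by
    rw [SemiconjBy, mul_add, mul_smul_comm, Algebra.algebraMap_eq_smul_one, mul_smul_comm, mul_one,
      haz, smul_sub, smul_smul, mul_comm t c, sub_add_cancel, smul_mul_assoc]
  rw [← hsc.exp_right.eq, NormedSpace.exp_add_of_commute (Algebra.commutes _ _).symm,
    ← algebraMap_exp_comm, ← Algebra.commutes, ← Algebra.smul_def, mul_smul_comm,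
    Real.exp_eq_exp_ℝ]

end BanachAlgebra

namespace Matrix

section Trace

variable {n R : Type*} [Fintype n] [DecidableEq n] [CommRing R]

theorem trace_pow_nonsing_inv_conj {P : Matrix n n R} (hP : IsUnit P) (M : Matrix n n R)
    (k : ℕ) : ((P⁻¹ * M * P) ^ k).trace = (M ^ k).trace := by
  obtain ⟨U, rfl⟩ := hP
  rw [← coe_units_inv, Units.conj_pow', trace_units_conj']

theorem trace_sq_smul_transpose_add_of_isNilpotent [IsReduced R] {N : Matrix n n R}
    (hN : IsNilpotent N) (s : R) : ((s • Nᵀ + N) ^ 2).trace = 2 * s * (Nᵀ * N).trace := by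
  have hNN : (N * N).trace = 0 := by
    rw [← sq]
    exact (isNilpotent_trace_of_isNilpotent (hN.pow_succ 1)).eq_zero
  have hNtNt : (Nᵀ * Nᵀ).trace = 0 := by rw [← transpose_mul, trace_transpose, hNN]
  simp only [sq, add_mul, mul_add, smul_mul_assoc, mul_smul_comm, trace_add,
    trace_smul, smul_eq_mul, hNN, hNtNt, trace_mul_comm N Nᵀ]
  ring

end Trace

open scoped Norms.Operator in
theorem _root_.HasDerivAt.of_deriv_apply_eq {m n : Type*} [Fintype m] [Fintype n]
    {f : ℝ → Matrix m n ℝ} {f' : Matrix m n ℝ} {x : ℝ} (h : HasDerivAt f f' x) :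
    Matrix.of (fun a b => deriv (fun t => f t a b) x) = f' := by
  ext a b
  exact ((entryLinearMap ℝ ℝ a b).toContinuousLinearMap.hasFDerivAt.comp_hasDerivAt x h).deriv

end Matrix

section LocalModel

open scoped Matrix.Norms.Operator

variable {r : ℕ} (N Y : Matrix (Fin r) (Fin r) ℝ) (x : ℝ) {y : ℝ}

theorem hmodX_eq : HmodX N Y x y = Nᵀ * Hmod N Y x y + Hmod N Y x y * N := by
  have hE : HasDerivAt (fun t : ℝ => exp (t • Nᵀ)) (Nᵀ * exp (x • Nᵀ)) x :=
    hasDerivAt_exp_smul_const' _ _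
  have hF : HasDerivAt (fun t : ℝ => exp (t • N)) (exp (x • N) * N) x :=
    hasDerivAt_exp_smul_const _ _
  refine ((hE.mul_const (exp (Real.log y • Y))).mul hF).congr_deriv ?_ |>.of_deriv_apply_eq
  simp only [Hmod, mul_assoc]

theorem hmodY_eq (hy : 0 < y) :
    HmodY N Y x y = y⁻¹ • (exp (x • Nᵀ) * (exp (Real.log y • Y) * Y) * exp (x • N)) := by
  have hC : HasDerivAt (fun t : ℝ => exp (Real.log t • Y))
      (y⁻¹ • (exp (Real.log y • Y) * Y)) y :=
    (hasDerivAt_exp_smul_const Y (Real.log y)).scomp y (Real.hasDerivAt_log hy.ne')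
  refine ((hC.const_mul (exp (x • Nᵀ))).mul_const (exp (x • N))).congr_deriv ?_
    |>.of_deriv_apply_eq
  rw [mul_smul_comm, smul_mul_assoc]

theorem isUnit_det_hmod : IsUnit (Hmod N Y x y).det :=
  (isUnit_iff_isUnit_det _).mp
    (((Matrix.isUnit_exp _).mul (Matrix.isUnit_exp _)).mul (Matrix.isUnit_exp _))

theorem hmod_mul_conj (M : Matrix (Fin r) (Fin r) ℝ) :
    Hmod N Y x y * ((exp (x • N))⁻¹ * M * exp (x • N))
      = exp (x • Nᵀ) * exp (Real.log y • Y) * M * exp (x • N) := by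
  have hF : IsUnit (exp (x • N)).det := (isUnit_iff_isUnit_det _).mp (Matrix.isUnit_exp _)
  simp only [Hmod, mul_assoc, mul_nonsing_inv_cancel_left _ _ hF]

theorem inv_hmod_mul_hmodX {N Y : Matrix (Fin r) (Fin r) ℝ}
    (hYN : Y * Nᵀ - Nᵀ * Y = (2 : ℝ) • Nᵀ) (hy : 0 < y) :
    (Hmod N Y x y)⁻¹ * HmodX N Y x y
      = (exp (x • N))⁻¹ * ((y ^ 2)⁻¹ • Nᵀ + N) * exp (x • N) := by
  have hC : Nᵀ * exp (Real.log y • Y) = (y ^ 2)⁻¹ • (exp (Real.log y • Y) * Nᵀ) := by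
    have hexp : Real.exp (2 * Real.log y) = y ^ 2 := by
      rw [two_mul, Real.exp_add, Real.exp_log hy, sq]
    have key : exp (Real.log y • Y) * Nᵀ
        = Real.exp (2 * Real.log y) • (Nᵀ * exp (Real.log y • Y)) :=
      exp_smul_mul_of_commutator_eq_smul hYN _
    rw [key, hexp, smul_smul, inv_mul_cancel₀ (by positivity), one_smul]
  have hE : Commute Nᵀ (exp (x • Nᵀ)) := ((Commute.refl Nᵀ).smul_right x).exp_right
  have hF : Commute (exp (x • N)) N := ((Commute.refl N).smul_left x).exp_left
  have hHX : HmodX N Y x y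
      = Hmod N Y x y * ((exp (x • N))⁻¹ * ((y ^ 2)⁻¹ • Nᵀ + N) * exp (x • N)) := by
    rw [hmod_mul_conj, hmodX_eq, Hmod]
    simp only [mul_add, add_mul, mul_smul_comm, smul_mul_assoc, mul_assoc]
    rw [← mul_assoc Nᵀ, hE.eq, mul_assoc _ Nᵀ, ← mul_assoc Nᵀ, hC, hF.eq]
    simp only [mul_smul_comm, smul_mul_assoc, mul_assoc]
  rw [hHX, nonsing_inv_mul_cancel_left _ _ (isUnit_det_hmod N Y x)]

theorem inv_hmod_mul_hmodY (hy : 0 < y) :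
    (Hmod N Y x y)⁻¹ * HmodY N Y x y = (exp (x • N))⁻¹ * (y⁻¹ • Y) * exp (x • N) := by
  have hHY : HmodY N Y x y = Hmod N Y x y * ((exp (x • N))⁻¹ * (y⁻¹ • Y) * exp (x • N)) := by
    rw [hmod_mul_conj, hmodY_eq N Y x hy]
    simp only [mul_smul_comm, smul_mul_assoc, mul_assoc]
  rw [hHY, nonsing_inv_mul_cancel_left _ _ (isUnit_det_hmod N Y x)]

end LocalModel

/-- The hyperbolic energy density of the local model map is the constant
`2 tr(Nᵀ N) + tr(Y²)`. -/
theorem statement6 {r : ℕ} (N Y : Matrix (Fin r) (Fin r) ℝ)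
    (hN : IsNilpotent N) (hY : Y.IsDiag)
    (hbr : N * Y - Y * N = (2 : ℝ) • N) :
    ∀ x y : ℝ, 0 < y →
      y ^ 2 * ((((Hmod N Y x y)⁻¹ * HmodX N Y x y) ^ 2).trace
          + (((Hmod N Y x y)⁻¹ * HmodY N Y x y) ^ 2).trace)
        = 2 * (Nᵀ * N).trace + (Y ^ 2).trace := by
  intro x y hy
  have hYN : Y * Nᵀ - Nᵀ * Y = (2 : ℝ) • Nᵀ := by
    simpa [hY.isSymm.eq] using congrArg transpose hbr
  rw [inv_hmod_mul_hmodX x hYN hy, inv_hmod_mul_hmodY N Y x hy,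
    trace_pow_nonsing_inv_conj (Matrix.isUnit_exp (x • N)),
    trace_pow_nonsing_inv_conj (Matrix.isUnit_exp (x • N)),
    trace_sq_smul_transpose_add_of_isNilpotent hN, smul_pow, trace_smul, smul_eq_mul]
  field_simp
end

section
/- Let N be a nilpotent real r×r matrix and Y a real diagonal r×r matrix with [N,Y] = 2N, and define H(x,y) = exp(x·Nᵀ)·exp((log y)·Y)·exp(x·N) for x ∈ ℝ, y > 0. Then for every α > 0 the total energy of the local model over a fundamental domain is finite: ∫_{(0,1)×(α,∞)} [ tr((H⁻¹·∂H/∂x)²) + tr((H⁻¹·∂H/∂y)²) ] dx dy < ∞. -/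
open Matrix MeasureTheory

/-!
Write `g = exp (x N)` and `D = exp ((log y) Y)`, so that `H = gᵀ D g`. The bracket relation makes
`Nᵀ` an eigenvector of `ad Y` (as `Y` is symmetric), whence `D⁻¹ Nᵀ D = y⁻² Nᵀ`. Therefore
`H⁻¹ ∂ₓH = g⁻¹ (y⁻² Nᵀ + N) g` and `H⁻¹ ∂_y H = g⁻¹ (y⁻¹ Y) g`, and the energy density is
`tr ((y⁻² Nᵀ + N)²) + tr ((y⁻¹ Y)²) = (2 tr (Nᵀ N) + tr (Y²)) / y²`, since `N²` and `(Nᵀ)²` are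
nilpotent and hence traceless. A constant multiple of `y⁻²` is integrable over `(0,1) × (α,∞)`.
-/

open NormedSpace Set

section BanachAlgebra

variable {𝔸 : Type*} [NormedRing 𝔸] [NormedAlgebra ℚ 𝔸] [CompleteSpace 𝔸]

theorem NormedSpace.exp_neg_mul_exp (a : 𝔸) : exp (-a) * exp a = 1 := by
  rw [← exp_add_of_commute (Commute.refl a).neg_left, neg_add_cancel, exp_zero]

theorem NormedSpace.exp_neg_mul_cancel_left (a b : 𝔸) : exp (-a) * (exp a * b) = b := by
  rw [← mul_assoc, exp_neg_mul_exp, one_mul]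

theorem SemiconjBy.exp_neg_mul_mul_exp_eq_smul [NormedAlgebra ℝ 𝔸] {x a : 𝔸} {c : ℝ}
    (h : SemiconjBy x a (a + algebraMap ℝ 𝔸 c)) :
    exp (-a) * x * exp a = Real.exp c • x := by
  rw [mul_assoc, h.exp_right.eq, exp_add_of_commute (Algebra.commutes c a).symm,
    ← algebraMap_exp_comm, Real.exp_eq_exp_ℝ, mul_assoc, ← Algebra.smul_def, mul_smul_comm,
    mul_smul_comm, exp_neg_mul_cancel_left]

end BanachAlgebra

namespace Matrix

variable {n R : Type*} [Fintype n] [DecidableEq n] [CommRing R]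

theorem exp_neg_mul_mul_exp_smul_of_sub_eq_smul {N Y : Matrix n n ℝ} {c : ℝ}
    (h : N * Y - Y * N = c • N) (s : ℝ) :
    exp (-(s • Y)) * N * exp (s • Y) = Real.exp (c * s) • N := by
  open scoped Norms.Operator in refine SemiconjBy.exp_neg_mul_mul_exp_eq_smul ?_
  rw [SemiconjBy, mul_smul_comm, add_mul, smul_mul_assoc, sub_eq_iff_eq_add'.mp h,
    Algebra.algebraMap_eq_smul_one, smul_mul_assoc, one_mul, smul_add, smul_smul, mul_comm]

omit [DecidableEq n] in
theorem transpose_mul_sub_of_isSymm {N Y : Matrix n n R} {c : R} (hY : Y.IsSymm)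
    (h : N * Y - Y * N = c • N) : Nᵀ * Y - Y * Nᵀ = (-c) • Nᵀ := by
  have := congrArg transpose h
  rw [transpose_sub, transpose_mul, transpose_mul, hY.eq, transpose_smul] at this
  rw [← neg_sub, this, neg_smul]

theorem trace_conj_sq {g g' : Matrix n n R} (h : g' * g = 1) (A : Matrix n n R) :
    ((g' * A * g) ^ 2).trace = (A ^ 2).trace := by
  have h' : g * g' = 1 := mul_eq_one_comm.mp h
  calc ((g' * A * g) ^ 2).trace = (g' * (A ^ 2 * g)).trace := by
        rw [sq, sq]; simp only [mul_assoc]; rw [← mul_assoc g g', h', one_mul]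
    _ = (A ^ 2).trace := by rw [trace_mul_comm, mul_assoc, h', mul_one]

theorem trace_sq_eq_zero_of_isNilpotent [IsReduced R] {N : Matrix n n R} (hN : IsNilpotent N) :
    (N ^ 2).trace = 0 :=
  (isNilpotent_trace_of_isNilpotent (hN.pow_succ 1)).eq_zero

theorem trace_sq_smul_transpose_add_self [IsReduced R] {N : Matrix n n R} (hN : IsNilpotent N)
    (c : R) : ((c • Nᵀ + N) ^ 2).trace = 2 * c * (Nᵀ * N).trace := by
  have hNT : (Nᵀ ^ 2).trace = 0 := by
    rw [← transpose_pow, trace_transpose, trace_sq_eq_zero_of_isNilpotent hN]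
  rw [sq, add_mul, mul_add, mul_add, smul_mul_smul, smul_mul_assoc, mul_smul_comm]
  simp only [trace_add, trace_smul, smul_eq_mul, ← sq, hNT, trace_sq_eq_zero_of_isNilpotent hN,
    trace_mul_comm N Nᵀ]
  ring

omit [DecidableEq n] in
open scoped Norms.Operator in
theorem deriv_apply_of_hasDerivAt {F : ℝ → Matrix n n ℝ} {F' : Matrix n n ℝ} {x : ℝ}
    (hF : HasDerivAt F F' x) (i j : n) : deriv (fun t ↦ F t i j) x = F' i j :=
  ((entryLinearMap ℝ ℝ i j).toContinuousLinearMap.hasFDerivAt.comp_hasDerivAt x hF).deriv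

end Matrix

theorem MeasureTheory.integrableOn_prod_Ioi_inv_sq {s : Set ℝ} (hs : volume s ≠ ⊤) {α : ℝ}
    (hα : 0 < α) : IntegrableOn (fun p : ℝ × ℝ ↦ (p.2 ^ 2)⁻¹) (s ×ˢ Ioi α) := by
  have hIoi : IntegrableOn (fun y : ℝ ↦ (y ^ 2)⁻¹) (Ioi α) := by
    refine (integrableOn_Ioi_rpow_of_lt (by norm_num : (-2 : ℝ) < -1) hα).congr_fun
      (fun y hy ↦ ?_) measurableSet_Ioi
    show y ^ (-2 : ℝ) = _
    rw [Real.rpow_neg (hα.trans hy).le, Real.rpow_two]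
  have := isFiniteMeasure_restrict.mpr hs
  rw [IntegrableOn, Measure.volume_eq_prod, ← Measure.prod_restrict]
  exact hIoi.comp_snd _

section LocalModel

variable {r : ℕ}

open scoped Matrix.Norms.Operator in
theorem hasDerivAt_Hmod_fst (N Y : Matrix (Fin r) (Fin r) ℝ) (x y : ℝ) :
    HasDerivAt (fun t ↦ Hmod N Y t y) (Nᵀ * Hmod N Y x y + Hmod N Y x y * N) x := by
  have h := ((hasDerivAt_exp_smul_const' Nᵀ x).mul_const (exp (Real.log y • Y))).mul
    (hasDerivAt_exp_smul_const N x)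
  -- `rfl` identifies the multiplication of the operator-norm ring structure with `Matrix.mul`.
  exact h.congr_deriv (by simp only [Hmod, mul_assoc]; rfl)

open scoped Matrix.Norms.Operator in
theorem hasDerivAt_Hmod_snd (N Y : Matrix (Fin r) (Fin r) ℝ) (x : ℝ) {y : ℝ} (hy : y ≠ 0) :
    HasDerivAt (fun t ↦ Hmod N Y x t)
      (exp (x • Nᵀ) * (y⁻¹ • (exp (Real.log y • Y) * Y)) * exp (x • N)) y :=
  (((hasDerivAt_exp_smul_const Y (Real.log y)).scomp y (Real.hasDerivAt_log hy)).const_mul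
    (exp (x • Nᵀ))).mul_const (exp (x • N))

theorem HmodX_eq (N Y : Matrix (Fin r) (Fin r) ℝ) (x y : ℝ) :
    HmodX N Y x y = Nᵀ * Hmod N Y x y + Hmod N Y x y * N := by
  ext i j
  exact Matrix.deriv_apply_of_hasDerivAt (hasDerivAt_Hmod_fst N Y x y) i j

theorem HmodY_eq (N Y : Matrix (Fin r) (Fin r) ℝ) (x : ℝ) {y : ℝ} (hy : y ≠ 0) :
    HmodY N Y x y = exp (x • Nᵀ) * (y⁻¹ • (exp (Real.log y • Y) * Y)) * exp (x • N) := by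
  ext i j
  exact Matrix.deriv_apply_of_hasDerivAt (hasDerivAt_Hmod_snd N Y x hy) i j

theorem Hmod_inv (N Y : Matrix (Fin r) (Fin r) ℝ) (x y : ℝ) :
    (Hmod N Y x y)⁻¹ = exp (-(x • N)) * exp (-(Real.log y • Y)) * exp (-(x • Nᵀ)) := by
  rw [Hmod, Matrix.mul_inv_rev, Matrix.mul_inv_rev, Matrix.exp_neg, Matrix.exp_neg,
    Matrix.exp_neg, mul_assoc]

theorem isUnit_det_Hmod (N Y : Matrix (Fin r) (Fin r) ℝ) (x y : ℝ) : IsUnit (Hmod N Y x y).det :=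
  (Matrix.isUnit_iff_isUnit_det _).mp
    (((Matrix.isUnit_exp _).mul (Matrix.isUnit_exp _)).mul (Matrix.isUnit_exp _))

theorem inv_Hmod_mul_HmodX {N Y : Matrix (Fin r) (Fin r) ℝ} (hY : Y.IsSymm)
    (hbr : N * Y - Y * N = (2 : ℝ) • N) (x : ℝ) {y : ℝ} (hy : 0 < y) :
    (Hmod N Y x y)⁻¹ * HmodX N Y x y = exp (-(x • N)) * ((y ^ 2)⁻¹ • Nᵀ + N) * exp (x • N) := by
  have hNT : exp (-(x • Nᵀ)) * Nᵀ * exp (x • Nᵀ) = Nᵀ := by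
    open scoped Matrix.Norms.Operator in
    exact SemiconjBy.exp_neg_mul_mul_exp_eq_self ((Commute.refl Nᵀ).smul_right x)
  have hDNT : exp (-(Real.log y • Y)) * Nᵀ * exp (Real.log y • Y) = (y ^ 2)⁻¹ • Nᵀ := by
    rw [Matrix.exp_neg_mul_mul_exp_smul_of_sub_eq_smul
      (Matrix.transpose_mul_sub_of_isSymm hY hbr), neg_mul, Real.exp_neg, mul_comm,
      Real.exp_mul, Real.exp_log hy, Real.rpow_two]
  have hN : exp (-(x • N)) * N * exp (x • N) = N := by
    open scoped Matrix.Norms.Operator in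
    exact SemiconjBy.exp_neg_mul_mul_exp_eq_self ((Commute.refl N).smul_right x)
  rw [HmodX_eq, mul_add,
    Matrix.nonsing_inv_mul_cancel_left (A := Hmod N Y x y) _ (isUnit_det_Hmod N Y x y),
    mul_add, add_mul, hN]
  congr 1
  calc (Hmod N Y x y)⁻¹ * (Nᵀ * Hmod N Y x y)
      = exp (-(x • N)) * (exp (-(Real.log y • Y)) * (exp (-(x • Nᵀ)) * Nᵀ * exp (x • Nᵀ))
          * exp (Real.log y • Y)) * exp (x • N) := by
        rw [Hmod_inv, Hmod]; simp only [mul_assoc]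
    _ = _ := by rw [hNT, hDNT]

theorem inv_Hmod_mul_HmodY (N Y : Matrix (Fin r) (Fin r) ℝ) (x : ℝ) {y : ℝ} (hy : y ≠ 0) :
    (Hmod N Y x y)⁻¹ * HmodY N Y x y = exp (-(x • N)) * (y⁻¹ • Y) * exp (x • N) := by
  have hcancel (A B : Matrix (Fin r) (Fin r) ℝ) : exp (-A) * (exp A * B) = B := by
    open scoped Matrix.Norms.Operator in exact exp_neg_mul_cancel_left A B
  rw [Hmod_inv, HmodY_eq N Y x hy]
  simp only [mul_assoc, smul_mul_assoc, mul_smul_comm, hcancel]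

theorem energy_density_Hmod {N Y : Matrix (Fin r) (Fin r) ℝ} (hN : IsNilpotent N) (hY : Y.IsSymm)
    (hbr : N * Y - Y * N = (2 : ℝ) • N) (x : ℝ) {y : ℝ} (hy : 0 < y) :
    (((Hmod N Y x y)⁻¹ * HmodX N Y x y) ^ 2).trace
      + (((Hmod N Y x y)⁻¹ * HmodY N Y x y) ^ 2).trace
      = (2 * (Nᵀ * N).trace + (Y ^ 2).trace) * (y ^ 2)⁻¹ := by
  have hg : exp (-(x • N)) * exp (x • N) = 1 := by
    open scoped Matrix.Norms.Operator in exact exp_neg_mul_exp _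
  rw [inv_Hmod_mul_HmodX hY hbr x hy, inv_Hmod_mul_HmodY N Y x hy.ne', Matrix.trace_conj_sq hg,
    Matrix.trace_conj_sq hg, Matrix.trace_sq_smul_transpose_add_self hN, smul_pow,
    Matrix.trace_smul, smul_eq_mul, inv_pow]
  ring

end LocalModel

/-- The total energy of the local model over the fundamental domain `(0,1) × (α,∞)`
is finite. -/
theorem statement8 {r : ℕ} (N Y : Matrix (Fin r) (Fin r) ℝ)
    (hN : IsNilpotent N) (hY : Y.IsDiag)
    (hbr : N * Y - Y * N = (2 : ℝ) • N)
    (α : ℝ) (hα : 0 < α) :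
    IntegrableOn
      (fun p : ℝ × ℝ =>
        (((Hmod N Y p.1 p.2)⁻¹ * HmodX N Y p.1 p.2) ^ 2).trace
          + (((Hmod N Y p.1 p.2)⁻¹ * HmodY N Y p.1 p.2) ^ 2).trace)
      (Set.Ioo (0 : ℝ) 1 ×ˢ Set.Ioi α) := by
  have hbound : IntegrableOn
      (fun p : ℝ × ℝ ↦ (2 * (Nᵀ * N).trace + (Y ^ 2).trace) * (p.2 ^ 2)⁻¹)
      (Ioo 0 1 ×ˢ Ioi α) :=
    (integrableOn_prod_Ioi_inv_sq (by simp) hα).const_mul _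
  refine hbound.congr_fun (fun p hp ↦ ?_) (measurableSet_Ioo.prod measurableSet_Ioi)
  exact (energy_density_Hmod hN hY.isSymm hbr p.1 (hα.trans hp.2)).symm
end

section
/- Let u : ℝ × [0,∞) → ℝ be continuous, 2π-periodic in the first variable x, harmonic on the open half-cylinder ℝ × (0,∞), with u(x,0) = 0 for all x. Then for every C¹ function ψ : ℝ × [0,∞) → ℝ that is 2π-periodic in x and vanishes for all y ≥ R (for some R > 0), the Caccioppoli-type inequality ∫_{(0,2π)×(0,∞)} |∇u|²·ψ² dx dy ≤ 4·∫_{(0,2π)×(0,∞)} |∇ψ|²·u² dx dy holds. -/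
/-!
Write `P = ψ²|∇u|²`, `Q = 2uψ ∇u·∇ψ`, `W = u²|∇ψ|²`. Since `u` is harmonic,
`div (uψ² ∇u) = P + Q`; integrating over `[0, 2π] × [ε, R]`, the vertical sides cancel by
periodicity and the top side vanishes with `ψ`, so `∫ (P + Q) = -B(ε)`, where `B(ε)` is the flux
of `uψ² ∇u` through the circle at height `ε`. As `P + 2Q + 4W = |ψ∇u + 2u∇ψ|² ≥ 0`, we get
`∫ P ≤ 2 ∫ (P + Q) + 4 ∫ W = -2B(ε) + 4 ∫ W` on every such box.

Nothing is known about `∇u` near the boundary, so `B(ε)` need not tend to `0`. However,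
`φ(t) = ∫ (uψ)²(x, t) dx` is nonnegative, tends to `0` as `t → 0⁺` (because `u = 0` on the
boundary), and its derivative `2B(t) + ∫ 2u²ψ ∂_yψ` differs from `2B(t)` by a term tending to `0`.
A function with these properties cannot have derivative `≤ -δ` on a whole interval `(0, c)`, so
`-2B(ε)` is arbitrarily small for arbitrarily small `ε`. Exhausting the half-cylinder by the
boxes and using monotone convergence gives the inequality.
-/

open MeasureTheory Real

open Filter Topology Set

namespace HalfCylinder

def openHalfPlane : Set (ℝ × ℝ) := {p | 0 < p.2}

def closedHalfPlane : Set (ℝ × ℝ) := {p | 0 ≤ p.2}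

lemma isOpen_openHalfPlane : IsOpen openHalfPlane := isOpen_lt continuous_const continuous_snd

lemma openHalfPlane_subset_closedHalfPlane : openHalfPlane ⊆ closedHalfPlane :=
  fun _ hp => le_of_lt (α := ℝ) hp

lemma uniqueDiffOn_closedHalfPlane : UniqueDiffOn ℝ closedHalfPlane :=
  uniqueDiffOn_convex (convex_halfSpace_ge (LinearMap.snd ℝ ℝ ℝ).isLinear 0)
    ⟨(0, 1), isOpen_openHalfPlane.subset_interior_iff.mpr openHalfPlane_subset_closedHalfPlane
      (show (0 : ℝ) < (0, (1 : ℝ)).2 from one_pos)⟩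

lemma differentiableAt_of_contDiffOn {v : ℝ × ℝ → ℝ} {n : WithTop ℕ∞}
    (hv : ContDiffOn ℝ n v openHalfPlane) (hn : n ≠ 0) {q : ℝ × ℝ} (hq : q ∈ openHalfPlane) :
    DifferentiableAt ℝ v q :=
  (hv.contDiffAt (isOpen_openHalfPlane.mem_nhds hq)).differentiableAt hn

lemma integrableOn_box {h : ℝ × ℝ → ℝ} (hh : ContinuousOn h openHalfPlane) {ε R : ℝ}
    (hε : 0 < ε) : IntegrableOn h (Icc (0, ε) (2 * π, R)) :=
  (hh.mono fun _ hq => hε.trans_le hq.1.2).integrableOn_compact isCompact_Icc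

section PartialDerivatives

variable {v w : ℝ × ℝ → ℝ} {p : ℝ × ℝ}

lemma hasDerivAt_pX_of_hasFDerivAt {L : ℝ × ℝ →L[ℝ] ℝ} (h : HasFDerivAt v L p) :
    HasDerivAt (fun t => v (t, p.2)) (L (1, 0)) p.1 :=
  h.comp_hasDerivAt p.1 ((hasDerivAt_id p.1).prodMk (hasDerivAt_const p.1 p.2))

lemma hasDerivAt_pY_of_hasFDerivAt {L : ℝ × ℝ →L[ℝ] ℝ} (h : HasFDerivAt v L p) :
    HasDerivAt (fun t => v (p.1, t)) (L (0, 1)) p.2 :=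
  h.comp_hasDerivAt p.2 ((hasDerivAt_const p.2 p.1).prodMk (hasDerivAt_id p.2))

lemma pX_eq_of_hasFDerivAt {L : ℝ × ℝ →L[ℝ] ℝ} (h : HasFDerivAt v L p) : pX v p = L (1, 0) :=
  (hasDerivAt_pX_of_hasFDerivAt h).deriv

lemma pY_eq_of_hasFDerivAt {L : ℝ × ℝ →L[ℝ] ℝ} (h : HasFDerivAt v L p) : pY v p = L (0, 1) :=
  (hasDerivAt_pY_of_hasFDerivAt h).deriv

lemma hasDerivAt_pX (h : DifferentiableAt ℝ v p) :
    HasDerivAt (fun t => v (t, p.2)) (pX v p) p.1 := by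
  rw [pX_eq_of_hasFDerivAt h.hasFDerivAt]
  exact hasDerivAt_pX_of_hasFDerivAt h.hasFDerivAt

lemma hasDerivAt_pY (h : DifferentiableAt ℝ v p) :
    HasDerivAt (fun t => v (p.1, t)) (pY v p) p.2 := by
  rw [pY_eq_of_hasFDerivAt h.hasFDerivAt]
  exact hasDerivAt_pY_of_hasFDerivAt h.hasFDerivAt

lemma pX_mul (hv : DifferentiableAt ℝ v p) (hw : DifferentiableAt ℝ w p) :
    pX (fun q => v q * w q) p = pX v p * w p + v p * pX w p :=
  ((hasDerivAt_pX hv).mul (hasDerivAt_pX hw)).deriv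

lemma pY_mul (hv : DifferentiableAt ℝ v p) (hw : DifferentiableAt ℝ w p) :
    pY (fun q => v q * w q) p = pY v p * w p + v p * pY w p :=
  ((hasDerivAt_pY hv).mul (hasDerivAt_pY hw)).deriv

lemma pX_add_periodic {L : ℝ} (hv : ∀ x y, v (x + L, y) = v (x, y)) (x y : ℝ) :
    pX v (x + L, y) = pX v (x, y) := by
  change deriv (fun t => v (t, y)) (x + L) = deriv (fun t => v (t, y)) x
  rw [← deriv_comp_add_const]
  simp only [hv]

lemma pY_eq_fderivWithin {s : Set (ℝ × ℝ)} (hv : DifferentiableWithinAt ℝ v s p) (hs : s ∈ 𝓝 p) :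
    pY v p = fderivWithin ℝ v s p (0, 1) := by
  rw [fderivWithin_of_mem_nhds hs]
  exact pY_eq_of_hasFDerivAt (hv.differentiableAt hs).hasFDerivAt

lemma contDiffOn_pX {s : Set (ℝ × ℝ)} {m n : WithTop ℕ∞} (hs : IsOpen s) (hv : ContDiffOn ℝ m v s)
    (hmn : n + 1 ≤ m) : ContDiffOn ℝ n (pX v) s :=
  ((hv.fderiv_of_isOpen hs hmn).clm_apply contDiffOn_const).congr fun _ hq =>
    pX_eq_of_hasFDerivAt (((hv.differentiableOn (by rintro rfl; simp at hmn)) _ hq).differentiableAt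
      (hs.mem_nhds hq)).hasFDerivAt

lemma contDiffOn_pY {s : Set (ℝ × ℝ)} {m n : WithTop ℕ∞} (hs : IsOpen s) (hv : ContDiffOn ℝ m v s)
    (hmn : n + 1 ≤ m) : ContDiffOn ℝ n (pY v) s :=
  ((hv.fderiv_of_isOpen hs hmn).clm_apply contDiffOn_const).congr fun _ hq =>
    pY_eq_of_hasFDerivAt (((hv.differentiableOn (by rintro rfl; simp at hmn)) _ hq).differentiableAt
      (hs.mem_nhds hq)).hasFDerivAt

lemma continuousOn_pX (hv : ContDiffOn ℝ 1 v openHalfPlane) : ContinuousOn (pX v) openHalfPlane :=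
  (contDiffOn_pX isOpen_openHalfPlane hv (n := 0) (by norm_num)).continuousOn

lemma continuousOn_pY (hv : ContDiffOn ℝ 1 v openHalfPlane) : ContinuousOn (pY v) openHalfPlane :=
  (contDiffOn_pY isOpen_openHalfPlane hv (n := 0) (by norm_num)).continuousOn

end PartialDerivatives

section Slices

variable {g : ℝ × ℝ → ℝ}

lemma continuousOn_intervalIntegral_slice {c : ℝ} (hg : ContinuousOn g {p | c ≤ p.2}) (a b : ℝ) :
    ContinuousOn (fun y => ∫ x in a..b, g (x, y)) (Ici c) := by
  -- freezing the height below `c` extends `g` to a continuous function on the whole plane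
  have hcont : Continuous (fun q : ℝ × ℝ => g (q.2, max q.1 c)) :=
    hg.comp_continuous (by fun_prop) fun q => le_max_right q.1 c
  refine (intervalIntegral.continuous_parametric_intervalIntegral_of_continuous'
    (μ := volume) (f := fun y x => g (x, max y c)) hcont a b).continuousOn.congr
    fun y (hy : c ≤ y) => ?_
  simp only [max_eq_left hy]

lemma tendsto_intervalIntegral_slice_zero (hg : ContinuousOn g closedHalfPlane)
    (hg0 : ∀ x, g (x, 0) = 0) (a b : ℝ) :
    Tendsto (fun t => ∫ x in a..b, g (x, t)) (𝓝[>] 0) (𝓝 0) := by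
  have h := (continuousOn_intervalIntegral_slice hg a b 0 (le_refl (0 : ℝ))).tendsto.mono_left
    (nhdsWithin_mono 0 Ioi_subset_Ici_self)
  simpa [hg0] using h

lemma intervalIntegrable_slice (hg : ContinuousOn g openHalfPlane) {t : ℝ} (ht : 0 < t)
    (a b : ℝ) : IntervalIntegrable (fun x => g (x, t)) volume a b :=
  (hg.comp_continuous (by fun_prop) fun _ => ht).intervalIntegrable a b

lemma intervalIntegral_slice_sub_eq {a b s t : ℝ} (hst : s ≤ t)
    (hg : ∀ q ∈ uIcc a b ×ˢ Icc s t, DifferentiableAt ℝ g q)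
    (hgy : ContinuousOn (pY g) (uIcc a b ×ˢ Icc s t)) :
    (∫ x in a..b, g (x, t)) - ∫ x in a..b, g (x, s) = ∫ y in s..t, ∫ x in a..b, pY g (x, y) := by
  have hcont : ContinuousOn g (uIcc a b ×ˢ Icc s t) := fun q hq =>
    (hg q hq).continuousAt.continuousWithinAt
  have hslice : ∀ y ∈ Icc s t, IntervalIntegrable (fun x => g (x, y)) volume a b := fun y hy =>
    (hcont.comp (by fun_prop : Continuous fun x : ℝ => (x, y)).continuousOn
      fun _ hx => ⟨hx, hy⟩).intervalIntegrable
  have hint : IntegrableOn (pY g) (uIcc a b ×ˢ Icc s t) :=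
    hgy.integrableOn_compact (isCompact_uIcc.prod isCompact_Icc)
  rw [← intervalIntegral.integral_sub (hslice t ⟨hst, le_rfl⟩) (hslice s ⟨le_rfl, hst⟩)]
  calc ∫ x in a..b, (g (x, t) - g (x, s))
      = ∫ x in a..b, ∫ y in s..t, pY g (x, y) := by
        refine intervalIntegral.integral_congr fun x hx => ?_
        have hgx : ContinuousOn (fun y => pY g (x, y)) (uIcc s t) := by
          rw [uIcc_of_le hst]
          exact hgy.comp (by fun_prop : Continuous fun y : ℝ => (x, y)).continuousOn
            fun _ hy => ⟨hx, hy⟩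
        refine (intervalIntegral.integral_eq_sub_of_hasDerivAt (f := fun y => g (x, y))
          (fun y hy => ?_) hgx.intervalIntegrable).symm
        rw [uIcc_of_le hst] at hy
        exact hasDerivAt_pY (hg (x, y) ⟨hx, hy⟩)
    _ = ∫ y in s..t, ∫ x in a..b, pY g (x, y) :=
        intervalIntegral_intervalIntegral_swap (hint.mono_set
          (prod_mono uIoc_subset_uIcc (by rw [uIoc_of_le hst]; exact Ioc_subset_Icc_self)))

end Slices

lemma frequently_neg_le_of_sub_eq_integral {φ F : ℝ → ℝ} (hφ : ∀ t, 0 ≤ φ t)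
    (hφ0 : Tendsto φ (𝓝[>] 0) (𝓝 0))
    (hF : ∀ s t, 0 < s → s ≤ t → IntervalIntegrable F volume s t)
    (hφF : ∀ s t, 0 < s → s ≤ t → φ t - φ s = ∫ y in s..t, F y) {δ : ℝ} (hδ : 0 < δ) :
    ∃ᶠ t in 𝓝[>] 0, -δ ≤ F t := by
  by_contra h
  simp only [not_frequently, not_le] at h
  obtain ⟨c, hc0, hFc⟩ := mem_nhdsGT_iff_exists_Ioo_subset.mp h
  set t := c / 2
  have ht : t ∈ Ioo 0 c := ⟨half_pos hc0, half_lt_self hc0⟩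
  have hdrop : ∀ s ∈ Ioo 0 t, φ t - φ s ≤ -δ * (t - s) := by
    intro s hs
    calc φ t - φ s = ∫ y in s..t, F y := hφF s t hs.1 hs.2.le
      _ ≤ ∫ _ in s..t, -δ :=
        intervalIntegral.integral_mono_on hs.2.le (hF s t hs.1 hs.2.le) intervalIntegrable_const
          fun y hy => (hFc ⟨hs.1.trans_le hy.1, hy.2.trans_lt ht.2⟩).le
      _ = -δ * (t - s) := by simp [mul_comm]
  have hlim : Tendsto (fun s => φ t - φ s) (𝓝[>] 0) (𝓝 (φ t - 0)) :=
    tendsto_const_nhds.sub hφ0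
  have hlim' : Tendsto (fun s => -δ * (t - s)) (𝓝[>] 0) (𝓝 (-δ * (t - 0))) :=
    ((continuous_const.mul (continuous_const.sub continuous_id)).tendsto 0).mono_left
      nhdsWithin_le_nhds
  have hφt : φ t ≤ -δ * t := by
    simpa using le_of_tendsto_of_tendsto hlim hlim' (eventually_of_mem (Ioo_mem_nhdsGT ht.1) hdrop)
  nlinarith [hφ t, ht.1]

lemma setLIntegral_le_of_eqOn_zero {α : Type*} [MeasurableSpace α] {μ : Measure α}
    {f : α → ENNReal} {s t : Set α} (hs : MeasurableSet s) (ht : MeasurableSet t)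
    (hf : EqOn f 0 (s \ t)) : ∫⁻ x in s, f x ∂μ ≤ ∫⁻ x in t, f x ∂μ := by
  rw [← lintegral_indicator hs, ← lintegral_indicator ht]
  refine lintegral_mono fun x => ?_
  by_cases hxt : x ∈ t
  · simpa [indicator_of_mem hxt] using indicator_le_self s f x
  · by_cases hxs : x ∈ s
    · simp [indicator_of_mem hxs, hf ⟨hxs, hxt⟩]
    · simp [indicator_of_notMem hxs]

lemma setLIntegral_box_le (f : ℝ × ℝ → ENNReal) {ε R : ℝ} (hε : 0 ≤ ε) :
    ∫⁻ p in Icc (0, ε) (2 * π, R), f p ≤ ∫⁻ p in Ioo 0 (2 * π) ×ˢ Ioi 0, f p := by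
  have hae : Icc ((0 : ℝ), ε) (2 * π, R) =ᵐ[volume] Ioo 0 (2 * π) ×ˢ Ioo ε R := by
    rw [Icc_prod_eq]
    exact Measure.set_prod_ae_eq Ioo_ae_eq_Icc.symm Ioo_ae_eq_Icc.symm
  rw [setLIntegral_congr hae]
  exact lintegral_mono_set (prod_mono subset_rfl (Ioo_subset_Ioi_self.trans (Ioi_subset_Ioi hε)))

section Caccioppoli

variable {u ψ : ℝ × ℝ → ℝ}

noncomputable def energyDensity (u ψ : ℝ × ℝ → ℝ) (p : ℝ × ℝ) : ℝ :=
  (pX u p ^ 2 + pY u p ^ 2) * ψ p ^ 2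

noncomputable def crossTerm (u ψ : ℝ × ℝ → ℝ) (p : ℝ × ℝ) : ℝ :=
  2 * u p * ψ p * (pX u p * pX ψ p + pY u p * pY ψ p)

noncomputable def circleFlux (u ψ : ℝ × ℝ → ℝ) (t : ℝ) : ℝ :=
  ∫ x in 0..2 * π, u (x, t) * ψ (x, t) ^ 2 * pY u (x, t)

lemma energyDensity_nonneg (p : ℝ × ℝ) : 0 ≤ energyDensity u ψ p := by
  unfold energyDensity; positivity

lemma continuousOn_energyDensity (hu : ContDiffOn ℝ 1 u openHalfPlane)
    (hψ : ContDiffOn ℝ 1 ψ openHalfPlane) : ContinuousOn (energyDensity u ψ) openHalfPlane := by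
  have := continuousOn_pX hu; have := continuousOn_pY hu; have := hψ.continuousOn
  unfold energyDensity; fun_prop

lemma continuousOn_crossTerm (hu : ContDiffOn ℝ 1 u openHalfPlane)
    (hψ : ContDiffOn ℝ 1 ψ openHalfPlane) : ContinuousOn (crossTerm u ψ) openHalfPlane := by
  have := continuousOn_pX hu; have := continuousOn_pY hu; have := hu.continuousOn
  have := continuousOn_pX hψ; have := continuousOn_pY hψ; have := hψ.continuousOn
  unfold crossTerm; fun_prop

lemma ofReal_integral_box_energyDensity (hu : ContDiffOn ℝ 1 u openHalfPlane)
    (hψ : ContDiffOn ℝ 1 ψ openHalfPlane) {ε R : ℝ} (hε : 0 < ε) :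
    ENNReal.ofReal (∫ p in Icc (0, ε) (2 * π, R), energyDensity u ψ p) =
      ∫⁻ p in Icc (0, ε) (2 * π, R), ENNReal.ofReal (energyDensity u ψ p) :=
  ofReal_integral_eq_lintegral_ofReal (integrableOn_box (continuousOn_energyDensity hu hψ) hε)
    (ae_of_all _ energyDensity_nonneg)

lemma energyDensity_le (p : ℝ × ℝ) :
    energyDensity u ψ p ≤
      2 * (energyDensity u ψ p + crossTerm u ψ p) + 4 * energyDensity ψ u p := by
  -- the difference of the two sides is `|ψ ∇u + 2u ∇ψ|²`
  unfold energyDensity crossTerm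
  nlinarith [sq_nonneg (ψ p * pX u p + 2 * u p * pX ψ p),
    sq_nonneg (ψ p * pY u p + 2 * u p * pY ψ p)]

lemma pX_add_pY_flux_eq (hu : ContDiffOn ℝ 2 u openHalfPlane)
    (hharm : ∀ p : ℝ × ℝ, 0 < p.2 → pXX u p + pYY u p = 0)
    (hψ : ContDiffOn ℝ 1 ψ openHalfPlane) {q : ℝ × ℝ} (hq : q ∈ openHalfPlane) :
    pX (fun p => u p * (ψ p * ψ p) * pX u p) q + pY (fun p => u p * (ψ p * ψ p) * pY u p) q =
      energyDensity u ψ q + crossTerm u ψ q := by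
  have du := differentiableAt_of_contDiffOn hu two_ne_zero hq
  have dψ := differentiableAt_of_contDiffOn hψ one_ne_zero hq
  have dux := differentiableAt_of_contDiffOn
    (contDiffOn_pX isOpen_openHalfPlane hu le_rfl) one_ne_zero hq
  have duy := differentiableAt_of_contDiffOn
    (contDiffOn_pY isOpen_openHalfPlane hu le_rfl) one_ne_zero hq
  have hΔ : pX (pX u) q + pY (pY u) q = 0 := hharm q hq
  rw [pX_mul (v := fun p => u p * (ψ p * ψ p)) (du.mul (dψ.mul dψ)) dux,
    pY_mul (v := fun p => u p * (ψ p * ψ p)) (du.mul (dψ.mul dψ)) duy,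
    pX_mul (w := fun q => ψ q * ψ q) du (dψ.mul dψ),
    pY_mul (w := fun q => ψ q * ψ q) du (dψ.mul dψ), pX_mul dψ dψ, pY_mul dψ dψ]
  unfold energyDensity crossTerm
  linear_combination u q * (ψ q * ψ q) * hΔ

lemma integral_box_eq_neg_circleFlux (hu : ContDiffOn ℝ 2 u openHalfPlane)
    (hper : ∀ x y : ℝ, u (x + 2 * π, y) = u (x, y))
    (hharm : ∀ p : ℝ × ℝ, 0 < p.2 → pXX u p + pYY u p = 0)
    (hψ : ContDiffOn ℝ 1 ψ openHalfPlane) (hψper : ∀ x y : ℝ, ψ (x + 2 * π, y) = ψ (x, y))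
    {ε R : ℝ} (hψR : ∀ x, ψ (x, R) = 0) (hε : 0 < ε) (hεR : ε ≤ R) :
    ∫ p in Icc (0, ε) (2 * π, R), (energyDensity u ψ p + crossTerm u ψ p) =
      -circleFlux u ψ ε := by
  set f : ℝ × ℝ → ℝ := fun p => u p * (ψ p * ψ p) * pX u p
  set g : ℝ × ℝ → ℝ := fun p => u p * (ψ p * ψ p) * pY u p
  have hV : ContDiffOn ℝ 1 (fun p => u p * (ψ p * ψ p)) openHalfPlane :=
    (hu.of_le one_le_two).mul (hψ.mul hψ)
  have hf : ContDiffOn ℝ 1 f openHalfPlane :=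
    hV.mul (contDiffOn_pX isOpen_openHalfPlane hu le_rfl)
  have hg : ContDiffOn ℝ 1 g openHalfPlane :=
    hV.mul (contDiffOn_pY isOpen_openHalfPlane hu le_rfl)
  have hbox : Icc ((0 : ℝ), ε) (2 * π, R) ⊆ openHalfPlane := fun q hq => hε.trans_le hq.1.2
  have hdiv : ∀ q ∈ openHalfPlane, fderiv ℝ f q (1, 0) + fderiv ℝ g q (0, 1) =
      energyDensity u ψ q + crossTerm u ψ q := fun q hq => by
    rw [← pX_eq_of_hasFDerivAt (differentiableAt_of_contDiffOn hf one_ne_zero hq).hasFDerivAt,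
      ← pY_eq_of_hasFDerivAt (differentiableAt_of_contDiffOn hg one_ne_zero hq).hasFDerivAt,
      pX_add_pY_flux_eq hu hharm hψ hq]
  have hgauss := integral_divergence_prod_Icc_of_hasFDerivAt_off_countable_of_le f g
    (fderiv ℝ f) (fderiv ℝ g) (0, ε) (2 * π, R) ⟨by positivity, hεR⟩ ∅ countable_empty
    (hf.continuousOn.mono hbox) (hg.continuousOn.mono hbox)
    (fun q hq => (differentiableAt_of_contDiffOn hf one_ne_zero (hε.trans hq.1.2.1)).hasFDerivAt)
    (fun q hq => (differentiableAt_of_contDiffOn hg one_ne_zero (hε.trans hq.1.2.1)).hasFDerivAt)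
    ((integrableOn_box ((continuousOn_energyDensity (hu.of_le one_le_two) hψ).add
      (continuousOn_crossTerm (hu.of_le one_le_two) hψ)) hε).congr_fun
      (fun q hq => (hdiv q (hbox hq)).symm) measurableSet_Icc)
  have htop : ∫ x in (0 : ℝ)..2 * π, g (x, R) = 0 := by simp [g, hψR]
  have hbottom : ∫ x in (0 : ℝ)..2 * π, g (x, ε) = circleFlux u ψ ε :=
    intervalIntegral.integral_congr fun x _ => by simp only [g]; ring
  have hsides : ∫ y in ε..R, f (2 * π, y) = ∫ y in ε..R, f (0, y) := by
    refine intervalIntegral.integral_congr fun y _ => ?_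
    have hux := pX_add_periodic hper 0 y
    have hu0 := hper 0 y
    have hψ0 := hψper 0 y
    simp only [zero_add] at hux hu0 hψ0
    simp only [f, hux, hu0, hψ0]
  rw [← setIntegral_congr_fun measurableSet_Icc fun q hq => hdiv q (hbox hq), hgauss]
  simp only [htop, hbottom, hsides]
  ring

lemma integral_energyDensity_le (hu : ContDiffOn ℝ 2 u openHalfPlane)
    (hper : ∀ x y : ℝ, u (x + 2 * π, y) = u (x, y))
    (hharm : ∀ p : ℝ × ℝ, 0 < p.2 → pXX u p + pYY u p = 0)
    (hψ : ContDiffOn ℝ 1 ψ openHalfPlane) (hψper : ∀ x y : ℝ, ψ (x + 2 * π, y) = ψ (x, y))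
    {ε R : ℝ} (hψR : ∀ x, ψ (x, R) = 0) (hε : 0 < ε) (hεR : ε ≤ R) :
    ∫ p in Icc (0, ε) (2 * π, R), energyDensity u ψ p ≤
      -(2 * circleFlux u ψ ε) + 4 * ∫ p in Icc (0, ε) (2 * π, R), energyDensity ψ u p := by
  have hu1 := hu.of_le one_le_two
  have hPQ : IntegrableOn (fun p => energyDensity u ψ p + crossTerm u ψ p)
      (Icc (0, ε) (2 * π, R)) :=
    integrableOn_box ((continuousOn_energyDensity hu1 hψ).add (continuousOn_crossTerm hu1 hψ)) hε
  have hW := integrableOn_box (R := R) (continuousOn_energyDensity hψ hu1) hε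
  calc ∫ p in Icc (0, ε) (2 * π, R), energyDensity u ψ p
      ≤ ∫ p in Icc (0, ε) (2 * π, R),
          (2 * (energyDensity u ψ p + crossTerm u ψ p) + 4 * energyDensity ψ u p) :=
        setIntegral_mono_on (integrableOn_box (continuousOn_energyDensity hu1 hψ) hε)
          ((hPQ.const_mul 2).add (hW.const_mul 4)) measurableSet_Icc fun p _ => energyDensity_le p
    _ = -(2 * circleFlux u ψ ε) + 4 * ∫ p in Icc (0, ε) (2 * π, R), energyDensity ψ u p := by
      rw [integral_add (hPQ.const_mul 2) (hW.const_mul 4), integral_const_mul, integral_const_mul,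
        integral_box_eq_neg_circleFlux hu hper hharm hψ hψper hψR hε hεR]
      ring

lemma tendsto_integral_pY_sub_circleFlux (hucont : ContinuousOn u closedHalfPlane)
    (hu : ContDiffOn ℝ 2 u openHalfPlane) (hbdry : ∀ x : ℝ, u (x, 0) = 0)
    (hψ : ContDiffOn ℝ 1 ψ closedHalfPlane) :
    Tendsto (fun t => (∫ x in 0..2 * π, pY (fun q => u q * ψ q * (u q * ψ q)) (x, t)) -
      2 * circleFlux u ψ t) (𝓝[>] 0) (𝓝 0) := by
  have hψo : ContDiffOn ℝ 1 ψ openHalfPlane := hψ.mono openHalfPlane_subset_closedHalfPlane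
  -- `∂_y ψ` extends continuously to the boundary as a one-sided derivative
  have hψ' : ContinuousOn (fun q => fderivWithin ℝ ψ closedHalfPlane q (0, 1)) closedHalfPlane :=
    (hψ.continuousOn_fderivWithin uniqueDiffOn_closedHalfPlane le_rfl).clm_apply
      continuousOn_const
  have := hψ.continuousOn
  have hlim := tendsto_intervalIntegral_slice_zero
    (g := fun q => 2 * u q ^ 2 * ψ q * fderivWithin ℝ ψ closedHalfPlane q (0, 1))
    (by fun_prop) (by simp [hbdry]) 0 (2 * π)
  refine hlim.congr' (eventually_mem_nhdsWithin.mono fun t (ht : 0 < t) => ?_)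
  dsimp only
  have hcont : ContinuousOn (fun q => u q * ψ q ^ 2 * pY u q) openHalfPlane := by
    have := hu.continuousOn; have := hψo.continuousOn
    have := continuousOn_pY (hu.of_le one_le_two)
    fun_prop
  have hgy : ContinuousOn (pY fun q => u q * ψ q * (u q * ψ q)) openHalfPlane :=
    continuousOn_pY (((hu.of_le one_le_two).mul hψo).mul ((hu.of_le one_le_two).mul hψo))
  rw [circleFlux, ← intervalIntegral.integral_const_mul, ← intervalIntegral.integral_sub
    (intervalIntegrable_slice hgy ht _ _) ((intervalIntegrable_slice hcont ht _ _).const_mul 2)]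
  refine intervalIntegral.integral_congr fun x _ => ?_
  have hq : (x, t) ∈ openHalfPlane := ht
  have du := differentiableAt_of_contDiffOn hu two_ne_zero hq
  have dψ := differentiableAt_of_contDiffOn hψo one_ne_zero hq
  rw [pY_mul (v := fun q => u q * ψ q) (w := fun q => u q * ψ q) (du.mul dψ) (du.mul dψ),
    pY_mul du dψ, pY_eq_fderivWithin (hψ.differentiableOn one_ne_zero _ ht.le)
      (mem_of_superset (isOpen_openHalfPlane.mem_nhds hq) openHalfPlane_subset_closedHalfPlane)]
  ring

lemma frequently_neg_circleFlux_le (hucont : ContinuousOn u closedHalfPlane)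
    (hu : ContDiffOn ℝ 2 u openHalfPlane) (hbdry : ∀ x : ℝ, u (x, 0) = 0)
    (hψ : ContDiffOn ℝ 1 ψ closedHalfPlane) {δ : ℝ} (hδ : 0 < δ) :
    ∃ᶠ t in 𝓝[>] 0, -(2 * circleFlux u ψ t) ≤ δ := by
  set g : ℝ × ℝ → ℝ := fun q => u q * ψ q * (u q * ψ q)
  have hψo : ContDiffOn ℝ 1 ψ openHalfPlane := hψ.mono openHalfPlane_subset_closedHalfPlane
  have hg : ContDiffOn ℝ 1 g openHalfPlane :=
    ((hu.of_le one_le_two).mul hψo).mul ((hu.of_le one_le_two).mul hψo)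
  have hgy : ∀ {s : ℝ}, 0 < s → ContinuousOn (pY g) {q | s ≤ q.2} := fun hs =>
    (continuousOn_pY hg).mono fun _ hq => hs.trans_le hq
  have := hψ.continuousOn
  have hdecay := frequently_neg_le_of_sub_eq_integral (δ := δ / 2)
    (φ := fun t => ∫ x in 0..2 * π, g (x, t)) (F := fun t => ∫ x in 0..2 * π, pY g (x, t))
    (fun t => intervalIntegral.integral_nonneg two_pi_pos.le fun x _ => mul_self_nonneg _)
    (tendsto_intervalIntegral_slice_zero (by fun_prop) (by simp [g, hbdry]) _ _)
    (fun s t hs hst => ((continuousOn_intervalIntegral_slice (hgy hs) _ _).mono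
      Icc_subset_Ici_self).intervalIntegrable_of_Icc hst)
    (fun s t hs hst => intervalIntegral_slice_sub_eq hst
      (fun q hq => differentiableAt_of_contDiffOn hg one_ne_zero (hs.trans_le hq.2.1))
      ((hgy hs).mono fun _ hq => hq.2.1))
    (half_pos hδ)
  have hsmall := (tendsto_integral_pY_sub_circleFlux hucont hu hbdry hψ).eventually
    (gt_mem_nhds (half_pos hδ))
  exact (hdecay.and_eventually hsmall).mono fun t ⟨h1, h2⟩ => by linarith

lemma lintegral_strip_le (hucont : ContinuousOn u closedHalfPlane)
    (hper : ∀ x y : ℝ, u (x + 2 * π, y) = u (x, y)) (hu : ContDiffOn ℝ 2 u openHalfPlane)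
    (hharm : ∀ p : ℝ × ℝ, 0 < p.2 → pXX u p + pYY u p = 0) (hbdry : ∀ x : ℝ, u (x, 0) = 0)
    (hψ : ContDiffOn ℝ 1 ψ closedHalfPlane) (hψper : ∀ x y : ℝ, ψ (x + 2 * π, y) = ψ (x, y))
    {R : ℝ} (hR : 0 < R) (hψ0 : ∀ p : ℝ × ℝ, R ≤ p.2 → ψ p = 0) {c : ℝ} (hc : 0 < c) :
    ∫⁻ p in Ioo 0 (2 * π) ×ˢ Ioi c, ENNReal.ofReal (energyDensity u ψ p) ≤
      4 * ∫⁻ p in Ioo 0 (2 * π) ×ˢ Ioi 0, ENNReal.ofReal (energyDensity ψ u p) := by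
  refine ENNReal.le_of_forall_pos_le_add fun η hη _ => ?_
  obtain ⟨ε, hflux, hε⟩ := ((frequently_neg_circleFlux_le hucont hu hbdry hψ
    (NNReal.coe_pos.mpr hη)).and_eventually (Ioo_mem_nhdsGT (lt_min hc hR))).exists
  have hεc : ε < c := hε.2.trans_le (min_le_left _ _)
  have hεR : ε < R := hε.2.trans_le (min_le_right _ _)
  have hψo : ContDiffOn ℝ 1 ψ openHalfPlane := hψ.mono openHalfPlane_subset_closedHalfPlane
  have hu1 := hu.of_le one_le_two
  have hvanish : EqOn (fun p => ENNReal.ofReal (energyDensity u ψ p)) 0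
      (Ioo 0 (2 * π) ×ˢ Ioi c \ Icc (0, ε) (2 * π, R)) := by
    rintro p ⟨⟨hx, hy⟩, hp⟩
    have hRp : R ≤ p.2 := by
      by_contra h
      exact hp ⟨⟨hx.1.le, (hεc.trans hy).le⟩, ⟨hx.2.le, (not_le.mp h).le⟩⟩
    simp [energyDensity, hψ0 p hRp]
  have hW0 : 0 ≤ ∫ p in Icc (0, ε) (2 * π, R), energyDensity ψ u p :=
    setIntegral_nonneg measurableSet_Icc fun p _ => energyDensity_nonneg p
  calc ∫⁻ p in Ioo 0 (2 * π) ×ˢ Ioi c, ENNReal.ofReal (energyDensity u ψ p)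
      ≤ ∫⁻ p in Icc (0, ε) (2 * π, R), ENNReal.ofReal (energyDensity u ψ p) :=
        setLIntegral_le_of_eqOn_zero (measurableSet_Ioo.prod measurableSet_Ioi) measurableSet_Icc
          hvanish
    _ = ENNReal.ofReal (∫ p in Icc (0, ε) (2 * π, R), energyDensity u ψ p) :=
        (ofReal_integral_box_energyDensity hu1 hψo hε.1).symm
    _ ≤ ENNReal.ofReal (4 * (∫ p in Icc (0, ε) (2 * π, R), energyDensity ψ u p) + η) := by
        refine ENNReal.ofReal_le_ofReal ?_
        linarith [integral_energyDensity_le hu hper hharm hψo hψper (fun x => hψ0 (x, R) le_rfl)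
          hε.1 hεR.le]
    _ = 4 * (∫⁻ p in Icc (0, ε) (2 * π, R), ENNReal.ofReal (energyDensity ψ u p)) + η := by
        rw [ENNReal.ofReal_add (by positivity) η.coe_nonneg, ENNReal.ofReal_mul zero_le_four,
          ofReal_integral_box_energyDensity hψo hu1 hε.1]
        simp
    _ ≤ 4 * (∫⁻ p in Ioo 0 (2 * π) ×ˢ Ioi 0, ENNReal.ofReal (energyDensity ψ u p)) + η := by
        gcongr 4 * ?_ + _
        exact setLIntegral_box_le _ hε.1.le

end Caccioppoli

end HalfCylinder

open HalfCylinder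

/-- Caccioppoli-type inequality on the half-cylinder. -/
theorem statement9 (u ψ : ℝ × ℝ → ℝ)
    (hcont : ContinuousOn u {p : ℝ × ℝ | 0 ≤ p.2})
    (hper : ∀ x y : ℝ, u (x + 2 * π, y) = u (x, y))
    (hC2 : ContDiffOn ℝ 2 u {p : ℝ × ℝ | 0 < p.2})
    (hharm : ∀ p : ℝ × ℝ, 0 < p.2 → pXX u p + pYY u p = 0)
    (hbdry : ∀ x : ℝ, u (x, 0) = 0)
    (hψC1 : ContDiffOn ℝ 1 ψ {p : ℝ × ℝ | 0 ≤ p.2})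
    (hψper : ∀ x y : ℝ, ψ (x + 2 * π, y) = ψ (x, y))
    (R : ℝ) (hR : 0 < R)
    (hψ0 : ∀ p : ℝ × ℝ, R ≤ p.2 → ψ p = 0) :
    ∫⁻ p in Set.Ioo (0 : ℝ) (2 * π) ×ˢ Set.Ioi (0 : ℝ),
        ENNReal.ofReal ((pX u p ^ 2 + pY u p ^ 2) * ψ p ^ 2)
      ≤ 4 * ∫⁻ p in Set.Ioo (0 : ℝ) (2 * π) ×ˢ Set.Ioi (0 : ℝ),
        ENNReal.ofReal ((pX ψ p ^ 2 + pY ψ p ^ 2) * u p ^ 2) := by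
  have hstrips : Ioo 0 (2 * π) ×ˢ Ioi (0 : ℝ) =
      ⋃ n : ℕ, Ioo 0 (2 * π) ×ˢ Ioi (1 / ((n : ℝ) + 1)) := by
    rw [← prod_iUnion]
    congr 1
    ext y
    simp only [mem_Ioi, mem_iUnion]
    exact ⟨fun hy => exists_nat_one_div_lt hy, fun ⟨n, hn⟩ => Nat.one_div_pos_of_nat.trans hn⟩
  have hmono : Monotone fun n : ℕ => Ioo 0 (2 * π) ×ˢ Ioi (1 / ((n : ℝ) + 1)) := fun m n hmn =>
    prod_mono subset_rfl (Ioi_subset_Ioi (Nat.one_div_le_one_div hmn))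
  conv_lhs => rw [hstrips, setLIntegral_iUnion_of_directed _ hmono.directed_le]
  exact iSup_le fun n => lintegral_strip_le hcont hper hC2 hharm hbdry hψC1 hψper hR hψ0
    Nat.one_div_pos_of_nat
end

section
/- Let w be a real-valued function on the punctured unit disk Δ* = {z ∈ ℂ : 0 < |z| < 1} that is C² and subharmonic (Δw ≥ 0) on Δ*, extends continuously to {z : 0 < |z| ≤ 1}, and has finite Dirichlet energy ∫_{Δ*} |∇w|² < ∞. Then w satisfies the maximum principle with respect to the exterior boundary circle alone: for every z ∈ Δ*, w(z) ≤ max_{|ζ| = 1} w(ζ). -/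
open MeasureTheory

/-!
Perturb `w` by `ε log ‖z‖`, which is harmonic on `Δ*`. The weak maximum principle on an annulus
`r ≤ ‖z‖ ≤ 1` (from the second-derivative test, after adding `δ ‖z‖²` to make the Laplacian
strictly positive) bounds `w z + ε log ‖z‖` by `M = sup_{‖ζ‖ = 1} w` as soon as
`w + ε log r ≤ M` on the inner circle; letting `ε → 0` gives `w z ≤ M`.

Finite energy provides such inner circles. In polar coordinates `∫∫ ρ |∇w|² dρ dθ < ∞` while
`∫ dρ / ρ` diverges at `0`, so there are arbitrarily small radii `r` with
`r² ∫ |∇w(r e^{iθ})|² dθ ≤ 1`, on which the oscillation of `w` is bounded. Integrating `|∂_ρ w|`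
from `r` to `1/2` and using AM-GM with parameter `1/ε` bounds the minimum of `w` on that circle by
`C + (ε/2) log (1/r)`, hence `w + ε log r ≤ C + (ε/2) log r`, which is `≤ M` for small `r`.
-/

open Set Filter Topology Real InnerProductSpace Laplacian

theorem IsLocalMax.deriv_deriv_nonpos {g : ℝ → ℝ} {t : ℝ} (hmax : IsLocalMax g t)
    (hg : ContinuousAt g t) : deriv (deriv g) t ≤ 0 := by
  by_contra! hpos
  have hmin := isLocalMin_of_deriv_deriv_pos hpos hmax.deriv_eq_zero hg
  have hconst : g =ᶠ[𝓝 t] fun _ => g t := by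
    filter_upwards [hmin, hmax] with s hs₁ hs₂ using le_antisymm hs₂ hs₁
  have hflat : deriv g =ᶠ[𝓝 t] fun _ => 0 := hconst.deriv.trans (by simp)
  simp [hflat.deriv_eq] at hpos

section LocalMax

variable {E : Type*} [NormedAddCommGroup E] [NormedSpace ℝ E] {v : E → ℝ} {p : E}

theorem IsLocalMax.iteratedFDeriv_two_nonpos (hmax : IsLocalMax v p) (hv : ContDiffAt ℝ 2 v p)
    (e : E) : iteratedFDeriv ℝ 2 v p ![e, e] ≤ 0 := by
  have hline : Continuous fun s : ℝ => p + s • e := by fun_prop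
  have hline0 : Tendsto (fun s : ℝ => p + s • e) (𝓝 0) (𝓝 p) := by
    simpa using hline.tendsto 0
  have hderiv : deriv (fun s : ℝ => v (p + s • e)) =ᶠ[𝓝 0]
      fun s => iteratedFDeriv ℝ 1 v (p + s • e) (fun _ => e) := by
    filter_upwards [hline0.eventually (hv.eventually (by simp))] with s hs
    rw [(hs.differentiableAt (by norm_num)).deriv_comp_add_smul, iteratedFDeriv_one_apply]
  have hsecond := ContDiffAt.deriv_fderiv_add_smul (n := 1) (t := (0 : ℝ)) (x := p) (y := e)
    (by simpa [one_add_one_eq_two] using hv)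
  have hmax' : IsLocalMax (fun s : ℝ => v (p + s • e)) 0 := by
    simpa [IsLocalMax, IsMaxFilter] using hline0.eventually hmax
  have := hmax'.deriv_deriv_nonpos (hv.continuousAt.comp_of_eq hline.continuousAt (by simp))
  rw [hderiv.deriv_eq, hsecond] at this
  convert this using 2
  · simp
  · ext i; fin_cases i <;> rfl

end LocalMax

section Laplacian

variable {E : Type*} [NormedAddCommGroup E] [InnerProductSpace ℝ E] [FiniteDimensional ℝ E]
  {v : E → ℝ} {p : E}

theorem IsLocalMax.laplacian_nonpos (hmax : IsLocalMax v p) (hv : ContDiffAt ℝ 2 v p) :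
    Δ v p ≤ 0 := by
  rw [laplacian_eq_iteratedFDeriv_stdOrthonormalBasis]
  exact Finset.sum_nonpos fun i _ => hmax.iteratedFDeriv_two_nonpos hv _

theorem laplacian_norm_sq (x : E) : Δ (fun y : E => ‖y‖ ^ 2) x = 2 * Module.finrank ℝ E := by
  have hsecond (e : E) : fderiv ℝ (fderiv ℝ fun y : E => ‖y‖ ^ 2) x e e = 2 * ‖e‖ ^ 2 := by
    rw [fderiv_norm_sq, ((innerSL ℝ (E := E)).hasFDerivAt.const_smul (2 : ℕ)).fderiv]
    simp only [smul_apply, nsmul_eq_mul, Nat.cast_ofNat, mul_eq_mul_left_iff,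
      OfNat.ofNat_ne_zero, or_false]
    exact real_inner_self_eq_norm_sq e
  rw [laplacian_eq_iteratedFDeriv_stdOrthonormalBasis]
  simp [iteratedFDeriv_two_apply, hsecond, mul_comm]

theorem IsCompact.le_of_laplacian_pos {K U : Set E} (hK : IsCompact K) (hU : IsOpen U)
    (hUK : U ⊆ K) (hcont : ContinuousOn v K) (hv : ∀ x ∈ U, ContDiffAt ℝ 2 v x)
    (hΔ : ∀ x ∈ U, 0 < Δ v x) {M : ℝ} (hM : ∀ x ∈ K \ U, v x ≤ M) {x : E} (hx : x ∈ K) :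
    v x ≤ M := by
  obtain ⟨x₀, hx₀K, hx₀max⟩ := hK.exists_isMaxOn ⟨x, hx⟩ hcont
  by_cases hx₀U : x₀ ∈ U
  · have hloc : IsLocalMax v x₀ :=
      hx₀max.isLocalMax (mem_of_superset (hU.mem_nhds hx₀U) hUK)
    exact absurd (hloc.laplacian_nonpos (hv x₀ hx₀U)) (hΔ x₀ hx₀U).not_ge
  · exact (hx₀max hx).trans (hM x₀ ⟨hx₀K, hx₀U⟩)

theorem IsCompact.le_of_laplacian_nonneg [Nontrivial E] {K U : Set E} (hK : IsCompact K)
    (hU : IsOpen U) (hUK : U ⊆ K) (hcont : ContinuousOn v K) (hv : ∀ x ∈ U, ContDiffAt ℝ 2 v x)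
    (hΔ : ∀ x ∈ U, 0 ≤ Δ v x) {M : ℝ} (hM : ∀ x ∈ K \ U, v x ≤ M) {x : E} (hx : x ∈ K) :
    v x ≤ M := by
  obtain ⟨R, hR⟩ := hK.isBounded.exists_norm_le
  have hsq : ContDiff ℝ 2 fun y : E => ‖y‖ ^ 2 := contDiff_norm_sq ℝ
  have hδsq (δ : ℝ) : ContDiff ℝ 2 (δ • fun y : E => ‖y‖ ^ 2) := hsq.const_smul δ
  have hdim : (0 : ℝ) < Module.finrank ℝ E := by exact_mod_cast Module.finrank_pos
  refine le_of_forall_pos_le_add fun η hη => ?_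
  set δ := η / (R ^ 2 + 1)
  have hδ : 0 < δ := by positivity
  have hperturbed : v x + δ * ‖x‖ ^ 2 ≤ M + δ * R ^ 2 := by
    refine hK.le_of_laplacian_pos (v := v + δ • fun y => ‖y‖ ^ 2) hU hUK
      (hcont.add (hδsq δ).continuous.continuousOn)
      (fun y hy => (hv y hy).add (hδsq δ).contDiffAt) (fun y hy => ?_) (fun y hy => ?_) hx
    · rw [(hv y hy).laplacian_add (hδsq δ).contDiffAt, laplacian_smul _ hsq.contDiffAt,
        laplacian_norm_sq, smul_eq_mul]
      have := hΔ y hy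
      positivity
    · have hy' : ‖y‖ ^ 2 ≤ R ^ 2 := pow_le_pow_left₀ (norm_nonneg y) (hR y hy.1) 2
      simp only [Pi.add_apply, Pi.smul_apply, smul_eq_mul]
      nlinarith [hM y hy]
  have hR2 : δ * R ^ 2 ≤ η := by
    rw [div_mul_eq_mul_div, div_le_iff₀ (by positivity)]
    nlinarith
  nlinarith [mul_nonneg hδ.le (sq_nonneg ‖x‖)]

end Laplacian

theorem lap_eq_laplacian {w : ℂ → ℝ} {z : ℂ} (hw : ContDiffAt ℝ 2 w z) : lap w z = Δ w z := by
  have hd : DifferentiableAt ℝ (fderiv ℝ w) z :=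
    (hw.fderiv_right (m := 1) (by norm_num)).differentiableAt (by norm_num)
  rw [laplacian_eq_iteratedFDeriv_complexPlane, lap]
  simp [iteratedFDeriv_two_apply, fderiv_clm_apply hd (differentiableAt_const _)]

theorem laplacian_add_const_mul_log_norm {w : ℂ → ℝ} {z : ℂ} (hw : ContDiffAt ℝ 2 w z)
    (hz : z ≠ 0) (ε : ℝ) : Δ (fun ζ => w ζ + ε * log ‖ζ‖) z = Δ w z := by
  have hlog : HarmonicAt (fun ζ : ℂ => log ‖ζ‖) z := analyticAt_id.harmonicAt_log_norm hz
  have hsplit : (fun ζ => w ζ + ε * log ‖ζ‖) = w + ε • fun ζ : ℂ => log ‖ζ‖ := by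
    ext; simp
  have hεlog : ContDiffAt ℝ 2 (ε • fun ζ : ℂ => log ‖ζ‖) z := hlog.1.const_smul ε
  rw [hsplit, hw.laplacian_add hεlog, laplacian_smul _ hlog.1, hlog.2.self_of_nhds]
  simp

theorem continuous_circleMap_uncurry : Continuous fun p : ℝ × ℝ => circleMap 0 p.1 p.2 := by
  unfold circleMap; fun_prop

theorem Complex.polarCoord_symm_eq_circleMap_s12 (p : ℝ × ℝ) :
    Complex.polarCoord.symm p = circleMap 0 p.1 p.2 := by
  simp [circleMap_zero, Complex.exp_mul_I, ← Complex.ofReal_cos, ← Complex.ofReal_sin]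

theorem setLIntegral_Ioo_prod_circleMap_le (G : ℂ → ENNReal) {a b : ℝ} (ha : 0 ≤ a) :
    ∫⁻ p in Ioo a b ×ˢ Ioo (-π) π, ENNReal.ofReal p.1 * G (circleMap 0 p.1 p.2)
      ≤ ∫⁻ z in {z : ℂ | a < ‖z‖ ∧ ‖z‖ < b}, G z := by
  set S := {z : ℂ | a < ‖z‖ ∧ ‖z‖ < b}
  have hS : MeasurableSet S :=
    (measurableSet_lt measurable_const continuous_norm.measurable).inter
      (measurableSet_lt continuous_norm.measurable measurable_const)
  have hrect : Ioo a b ×ˢ Ioo (-π) π ⊆ polarCoord.target := fun p hp =>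
    ⟨lt_of_le_of_lt ha hp.1.1, hp.2⟩
  calc ∫⁻ p in Ioo a b ×ˢ Ioo (-π) π, ENNReal.ofReal p.1 * G (circleMap 0 p.1 p.2)
      = ∫⁻ p in Ioo a b ×ˢ Ioo (-π) π,
          ENNReal.ofReal p.1 • S.indicator G (Complex.polarCoord.symm p) := by
        refine setLIntegral_congr_fun (measurableSet_Ioo.prod measurableSet_Ioo) fun p hp => ?_
        have hpos : 0 < p.1 := lt_of_le_of_lt ha hp.1.1
        rw [Complex.polarCoord_symm_eq_circleMap_s12, indicator_of_mem, smul_eq_mul]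
        simp [S, abs_of_pos hpos, hp.1.1, hp.1.2]
    _ ≤ ∫⁻ p in polarCoord.target,
          ENNReal.ofReal p.1 • S.indicator G (Complex.polarCoord.symm p) :=
        lintegral_mono_set hrect
    _ = ∫⁻ z in S, G z := by
        rw [Complex.lintegral_comp_polarCoord_symm, lintegral_indicator hS]

def puncturedDisk : Set ℂ := {z : ℂ | 0 < ‖z‖ ∧ ‖z‖ < 1}

theorem isOpen_puncturedDisk : IsOpen puncturedDisk :=
  (isOpen_lt continuous_const continuous_norm).inter (isOpen_lt continuous_norm continuous_const)

theorem circleMap_mem_puncturedDisk {r : ℝ} (h0 : 0 < r) (h1 : r < 1) (θ : ℝ) :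
    circleMap 0 r θ ∈ puncturedDisk := by
  simp [puncturedDisk, abs_of_pos h0, h0.ne', h1]

noncomputable def gradNormSq (w : ℂ → ℝ) (z : ℂ) : ℝ := pdX w z ^ 2 + pdY w z ^ 2

section GradNormSq

variable {w : ℂ → ℝ}

theorem gradNormSq_nonneg (w : ℂ → ℝ) (z : ℂ) : 0 ≤ gradNormSq w z := by
  unfold gradNormSq; positivity

theorem measurable_gradNormSq (w : ℂ → ℝ) : Measurable (gradNormSq w) :=
  ((measurable_fderiv_apply_const ℝ w 1).pow_const 2).add
    ((measurable_fderiv_apply_const ℝ w Complex.I).pow_const 2)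

theorem measurable_polar_gradNormSq (w : ℂ → ℝ) :
    Measurable fun p : ℝ × ℝ =>
      ENNReal.ofReal p.1 * ENNReal.ofReal (gradNormSq w (circleMap 0 p.1 p.2)) :=
  measurable_fst.ennreal_ofReal.mul
    ((measurable_gradNormSq w).comp continuous_circleMap_uncurry.measurable).ennreal_ofReal

theorem sq_fderiv_apply_le (w : ℂ → ℝ) (z e : ℂ) :
    fderiv ℝ w z e ^ 2 ≤ ‖e‖ ^ 2 * gradNormSq w z := by
  have hdecomp : fderiv ℝ w z e = e.re * pdX w z + e.im * pdY w z := by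
    have he : e = e.re • (1 : ℂ) + e.im • Complex.I := by simp [Complex.real_smul]
    rw [he, map_add, map_smul, map_smul]
    simp [pdX, pdY]
  rw [hdecomp, Complex.sq_norm, Complex.normSq_apply, gradNormSq]
  nlinarith [sq_nonneg (e.re * pdY w z - e.im * pdX w z)]

theorem continuousOn_gradNormSq (hw : ContDiffOn ℝ 1 w puncturedDisk) :
    ContinuousOn (gradNormSq w) puncturedDisk := by
  have h := hw.continuousOn_fderiv_of_isOpen isOpen_puncturedDisk le_rfl
  exact ((h.clm_apply continuousOn_const).pow 2).add ((h.clm_apply continuousOn_const).pow 2)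

theorem setLIntegral_Ioo_prod_gradNormSq_le
    (henergy : IntegrableOn (gradNormSq w) puncturedDisk) {a b : ℝ} (ha : 0 ≤ a) (hb : b ≤ 1) :
    ∫⁻ p in Ioo a b ×ˢ Ioo (-π) π,
        ENNReal.ofReal p.1 * ENNReal.ofReal (gradNormSq w (circleMap 0 p.1 p.2))
      ≤ ENNReal.ofReal (∫ z in puncturedDisk, gradNormSq w z) := by
  rw [ofReal_integral_eq_lintegral_ofReal henergy (ae_of_all _ (gradNormSq_nonneg w))]
  refine (setLIntegral_Ioo_prod_circleMap_le _ ha).trans (lintegral_mono_set fun z hz => ?_)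
  exact ⟨ha.trans_lt hz.1, hz.2.trans_le hb⟩

end GradNormSq

theorem abs_le_half_mul_sq_add_inv (x : ℝ) {t : ℝ} (ht : 0 < t) :
    |x| ≤ (t * x ^ 2 + t⁻¹) / 2 := by
  have key : t * x ^ 2 + t⁻¹ - 2 * |x| = t⁻¹ * (t * |x| - 1) ^ 2 := by
    field_simp
    rw [← sq_abs x]
    ring
  have : 0 ≤ t⁻¹ * (t * |x| - 1) ^ 2 := by positivity
  linarith

theorem abs_sub_le_integral_abs_deriv {f f' : ℝ → ℝ} {a b c d : ℝ}
    (hf : ∀ t ∈ Icc c d, HasDerivAt f (f' t) t) (hf' : ContinuousOn f' (Icc c d))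
    (ha : a ∈ Icc c d) (hb : b ∈ Icc c d) : |f b - f a| ≤ ∫ t in c..d, |f' t| := by
  wlog hab : a ≤ b generalizing a b
  · rw [abs_sub_comm]; exact this hb ha (le_of_not_ge hab)
  have hsub : uIcc a b ⊆ Icc c d := by
    rw [uIcc_of_le hab]; exact Icc_subset_Icc ha.1 hb.2
  rw [← intervalIntegral.integral_eq_sub_of_hasDerivAt (fun t ht => hf t (hsub ht))
    ((hf'.mono hsub).intervalIntegrable)]
  refine (intervalIntegral.abs_integral_le_integral_abs hab).trans
    (intervalIntegral.integral_mono_interval ha.1 hab hb.2 (ae_of_all _ fun _ => abs_nonneg _) ?_)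
  exact (hf'.abs.mono (uIcc_of_le (ha.1.trans ha.2)).subset).intervalIntegrable

theorem DifferentiableAt.hasDerivAt_comp_circleMap {w : ℂ → ℝ} {r θ : ℝ}
    (hw : DifferentiableAt ℝ w (circleMap 0 r θ)) :
    HasDerivAt (fun θ => w (circleMap 0 r θ))
      (fderiv ℝ w (circleMap 0 r θ) (circleMap 0 r θ * Complex.I)) θ :=
  hw.hasFDerivAt.comp_hasDerivAt θ (hasDerivAt_circleMap 0 r θ)

theorem DifferentiableAt.hasDerivAt_comp_circleMap_radius {w : ℂ → ℝ} {ρ θ : ℝ}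
    (hw : DifferentiableAt ℝ w (circleMap 0 ρ θ)) :
    HasDerivAt (fun ρ => w (circleMap 0 ρ θ))
      (fderiv ℝ w (circleMap 0 ρ θ) (circleMap 0 1 θ)) ρ := by
  have hray : HasDerivAt (fun ρ : ℝ => circleMap 0 ρ θ) (circleMap 0 1 θ) ρ := by
    simpa [circleMap_zero] using (Complex.ofRealCLM.hasDerivAt (x := ρ)).mul_const
      (Complex.exp (θ * Complex.I))
  exact hw.hasFDerivAt.comp_hasDerivAt ρ hray

theorem circleMap_zero_arg {ζ : ℂ} {r : ℝ} (h : ‖ζ‖ = r) : circleMap 0 r ζ.arg = ζ := by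
  simpa [circleMap, h] using Complex.norm_mul_exp_arg_mul_I ζ

section Circles

variable {w : ℂ → ℝ}

theorem continuous_gradNormSq_circleMap (hw : ContDiffOn ℝ 1 w puncturedDisk) {r : ℝ}
    (h0 : 0 < r) (h1 : r < 1) : Continuous fun θ => gradNormSq w (circleMap 0 r θ) :=
  (continuousOn_gradNormSq hw).comp_continuous (continuous_circleMap 0 r)
    (circleMap_mem_puncturedDisk h0 h1)

theorem abs_fderiv_circleMap_le (w : ℂ → ℝ) {r : ℝ} (h0 : 0 ≤ r) (θ : ℝ) :
    |fderiv ℝ w (circleMap 0 r θ) (circleMap 0 r θ * Complex.I)|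
      ≤ (r ^ 2 * gradNormSq w (circleMap 0 r θ) + 1) / 2 := by
  have hsq := sq_fderiv_apply_le w (circleMap 0 r θ) (circleMap 0 r θ * Complex.I)
  rw [norm_mul, norm_circleMap_zero, Complex.norm_I, abs_of_nonneg h0, mul_one] at hsq
  have hamgm := abs_le_half_mul_sq_add_inv
    (fderiv ℝ w (circleMap 0 r θ) (circleMap 0 r θ * Complex.I)) one_pos
  rw [inv_one, one_mul] at hamgm
  linarith

theorem le_add_integral_gradNormSq_of_norm_eq (hw : ContDiffOn ℝ 1 w puncturedDisk) {r : ℝ}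
    (h0 : 0 < r) (h1 : r < 1) {ζ₁ ζ₂ : ℂ} (hζ₁ : ‖ζ₁‖ = r) (hζ₂ : ‖ζ₂‖ = r) :
    w ζ₁ ≤ w ζ₂ + (r ^ 2 * (∫ θ in (-π)..π, gradNormSq w (circleMap 0 r θ)) + 2 * π) / 2 := by
  rw [← circleMap_zero_arg hζ₁, ← circleMap_zero_arg hζ₂]
  have harg (ζ : ℂ) : ζ.arg ∈ Icc (-π) π := ⟨(Complex.neg_pi_lt_arg ζ).le, Complex.arg_le_pi ζ⟩
  set u' : ℝ → ℝ := fun θ => fderiv ℝ w (circleMap 0 r θ) (circleMap 0 r θ * Complex.I)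
  have hmem := circleMap_mem_puncturedDisk h0 h1
  have hderiv (θ : ℝ) : HasDerivAt (fun θ => w (circleMap 0 r θ)) (u' θ) θ :=
    ((hw.differentiableOn one_ne_zero _ (hmem θ)).differentiableAt
      (isOpen_puncturedDisk.mem_nhds (hmem θ))).hasDerivAt_comp_circleMap
  have hu' : Continuous u' :=
    ((hw.continuousOn_fderiv_of_isOpen isOpen_puncturedDisk le_rfl).comp_continuous
      (continuous_circleMap 0 r) hmem).clm_apply ((continuous_circleMap 0 r).mul continuous_const)
  have hF : IntervalIntegrable (fun θ => r ^ 2 * gradNormSq w (circleMap 0 r θ)) volume (-π) π :=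
    (continuous_const.mul (continuous_gradNormSq_circleMap hw h0 h1)).intervalIntegrable _ _
  calc w (circleMap 0 r ζ₁.arg)
      ≤ w (circleMap 0 r ζ₂.arg) + |w (circleMap 0 r ζ₁.arg) - w (circleMap 0 r ζ₂.arg)| := by
        linarith [le_abs_self (w (circleMap 0 r ζ₁.arg) - w (circleMap 0 r ζ₂.arg))]
    _ ≤ w (circleMap 0 r ζ₂.arg) + ∫ θ in (-π)..π, |u' θ| := by
        gcongr
        exact abs_sub_le_integral_abs_deriv (fun θ _ => hderiv θ) hu'.continuousOn
          (harg ζ₂) (harg ζ₁)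
    _ ≤ w (circleMap 0 r ζ₂.arg)
          + ∫ θ in (-π)..π, (r ^ 2 * gradNormSq w (circleMap 0 r θ) + 1) / 2 := by
        gcongr
        exact intervalIntegral.integral_mono_on (by linarith [pi_pos])
          (hu'.abs.intervalIntegrable _ _) ((hF.add intervalIntegrable_const).div_const _)
          fun θ _ => abs_fderiv_circleMap_le w h0.le θ
    _ = _ := by
        rw [intervalIntegral.integral_div,
          intervalIntegral.integral_add hF intervalIntegrable_const,
          intervalIntegral.integral_const_mul, intervalIntegral.integral_const, smul_eq_mul]
        ring

end Circles

theorem lintegral_inv_Ioo {a b : ℝ} (ha : 0 < a) (hab : a ≤ b) :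
    ∫⁻ ρ in Ioo a b, ENNReal.ofReal ρ⁻¹ = ENNReal.ofReal (log (b / a)) := by
  have hcont : ContinuousOn (fun ρ : ℝ => ρ⁻¹) (Icc a b) :=
    continuousOn_inv₀.mono fun ρ hρ => (ha.trans_le hρ.1).ne'
  rw [← ofReal_integral_eq_lintegral_ofReal
    (hcont.integrableOn_Icc.mono_set Ioo_subset_Icc_self)
    ((ae_restrict_iff' measurableSet_Ioo).2
      (ae_of_all _ fun ρ hρ => (inv_pos.2 (ha.trans hρ.1)).le)),
    ← integral_Ioc_eq_integral_Ioo, ← intervalIntegral.integral_of_le hab,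
    integral_inv_of_pos ha (ha.trans_le hab)]

section Radius

variable {w : ℂ → ℝ}

theorem lintegral_gradNormSq_circleMap (hw : ContDiffOn ℝ 1 w puncturedDisk) {r : ℝ}
    (h0 : 0 < r) (h1 : r < 1) :
    ∫⁻ θ in Ioo (-π) π, ENNReal.ofReal (gradNormSq w (circleMap 0 r θ))
      = ENNReal.ofReal (∫ θ in (-π)..π, gradNormSq w (circleMap 0 r θ)) := by
  rw [← ofReal_integral_eq_lintegral_ofReal
    ((continuous_gradNormSq_circleMap hw h0 h1).continuousOn.integrableOn_Icc.mono_set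
      Ioo_subset_Icc_self)
    (ae_of_all _ fun θ => gradNormSq_nonneg w _),
    ← integral_Ioc_eq_integral_Ioo, ← intervalIntegral.integral_of_le (by linarith [pi_pos])]

theorem exists_radius_sq_mul_integral_gradNormSq_le_one (hw : ContDiffOn ℝ 1 w puncturedDisk)
    (henergy : IntegrableOn (gradNormSq w) puncturedDisk) {c : ℝ} (hc : 0 < c) (hc1 : c ≤ 1) :
    ∃ r ∈ Ioo 0 c, r ^ 2 * ∫ θ in (-π)..π, gradNormSq w (circleMap 0 r θ) ≤ 1 := by
  set E := ∫ z in puncturedDisk, gradNormSq w z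
  have hE : 0 ≤ E := setIntegral_nonneg isOpen_puncturedDisk.measurableSet
    fun z _ => gradNormSq_nonneg w z
  -- on `(a, c)` the weight `1 / ρ` has mass `E + 1`: more than the energy can pay for if
  -- every circle there had `ρ² ∫ |∇w|² dθ > 1`
  set a := c * exp (-(E + 1))
  have ha : 0 < a := by positivity
  have hac : a < c := mul_lt_of_lt_one_right hc (exp_lt_one_iff.2 (by linarith))
  have hlog : log (c / a) = E + 1 := by
    rw [div_mul_cancel_left₀ hc.ne', log_inv, log_exp, neg_neg]
  by_contra! hlarge
  have hpointwise : ∀ ρ ∈ Ioo a c, ENNReal.ofReal ρ⁻¹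
      ≤ ∫⁻ θ in Ioo (-π) π, ENNReal.ofReal ρ * ENNReal.ofReal (gradNormSq w (circleMap 0 ρ θ)) := by
    intro ρ hρ
    have hρ0 : 0 < ρ := ha.trans hρ.1
    have hρ1 : 1 < ρ ^ 2 * _ := hlarge ρ ⟨hρ0, hρ.2⟩
    have hmeas : Measurable fun θ => ENNReal.ofReal (gradNormSq w (circleMap 0 ρ θ)) :=
      ((measurable_gradNormSq w).comp (continuous_circleMap 0 ρ).measurable).ennreal_ofReal
    rw [lintegral_const_mul _ hmeas,
      lintegral_gradNormSq_circleMap hw hρ0 (hρ.2.trans_le hc1), ← ENNReal.ofReal_mul hρ0.le]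
    refine ENNReal.ofReal_le_ofReal ((inv_le_iff_one_le_mul₀ hρ0).2 ?_)
    nlinarith
  have : ENNReal.ofReal (E + 1) ≤ ENNReal.ofReal E :=
    calc ENNReal.ofReal (E + 1) = ∫⁻ ρ in Ioo a c, ENNReal.ofReal ρ⁻¹ := by
          rw [lintegral_inv_Ioo ha hac.le, hlog]
      _ ≤ ∫⁻ ρ in Ioo a c, ∫⁻ θ in Ioo (-π) π,
            ENNReal.ofReal ρ * ENNReal.ofReal (gradNormSq w (circleMap 0 ρ θ)) :=
          setLIntegral_mono' measurableSet_Ioo hpointwise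
      _ = ∫⁻ p in Ioo a c ×ˢ Ioo (-π) π,
            ENNReal.ofReal p.1 * ENNReal.ofReal (gradNormSq w (circleMap 0 p.1 p.2)) := by
          rw [Measure.volume_eq_prod,
            setLIntegral_prod _ (measurable_polar_gradNormSq w).aemeasurable]
      _ ≤ ENNReal.ofReal E := setLIntegral_Ioo_prod_gradNormSq_le henergy ha.le hc1
  linarith [(ENNReal.ofReal_le_ofReal_iff hE).1 this]

end Radius

theorem ofReal_integral_le_lintegral_ofReal {α : Type*} [MeasurableSpace α] {μ : Measure α}
    (f : α → ℝ) : ENNReal.ofReal (∫ x, f x ∂μ) ≤ ∫⁻ x, ENNReal.ofReal (f x) ∂μ := by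
  by_cases hf : Integrable f μ
  · rw [integral_eq_lintegral_pos_part_sub_lintegral_neg_part hf]
    exact (ENNReal.ofReal_le_ofReal (sub_le_self _ ENNReal.toReal_nonneg)).trans
      ENNReal.ofReal_toReal_le
  · simp [integral_undef hf]

section Radial

variable {w : ℂ → ℝ}

theorem abs_fderiv_circleMap_radius_le (w : ℂ → ℝ) {ρ t : ℝ} (hρ : 0 < ρ) (ht : 0 < t) (θ : ℝ) :
    |fderiv ℝ w (circleMap 0 ρ θ) (circleMap 0 1 θ)|
      ≤ t / 2 * (ρ * gradNormSq w (circleMap 0 ρ θ)) + 1 / (2 * t) * ρ⁻¹ := by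
  have hsq := sq_fderiv_apply_le w (circleMap 0 ρ θ) (circleMap 0 1 θ)
  rw [norm_circleMap_zero, abs_one, one_pow, one_mul] at hsq
  refine (abs_le_half_mul_sq_add_inv _ (mul_pos ht hρ)).trans ?_
  calc (t * ρ * fderiv ℝ w (circleMap 0 ρ θ) (circleMap 0 1 θ) ^ 2 + (t * ρ)⁻¹) / 2
      ≤ (t * ρ * gradNormSq w (circleMap 0 ρ θ) + (t * ρ)⁻¹) / 2 := by gcongr
    _ = t / 2 * (ρ * gradNormSq w (circleMap 0 ρ θ)) + 1 / (2 * t) * ρ⁻¹ := by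
      rw [mul_inv]; ring

theorem ofReal_sub_le_lintegral_radial (hw : ContDiffOn ℝ 1 w puncturedDisk) {a b : ℝ}
    (ha : 0 < a) (hab : a ≤ b) (hb : b < 1) (θ : ℝ) {t : ℝ} (ht : 0 < t) :
    ENNReal.ofReal (w (circleMap 0 a θ) - w (circleMap 0 b θ))
      ≤ ENNReal.ofReal (t / 2) * (∫⁻ ρ in Ioo a b,
          ENNReal.ofReal ρ * ENNReal.ofReal (gradNormSq w (circleMap 0 ρ θ)))
        + ENNReal.ofReal (log (b / a) / (2 * t)) := by
  set g' : ℝ → ℝ := fun ρ => fderiv ℝ w (circleMap 0 ρ θ) (circleMap 0 1 θ)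
  have hmem : ∀ ρ ∈ Icc a b, circleMap 0 ρ θ ∈ puncturedDisk := fun ρ hρ =>
    circleMap_mem_puncturedDisk (ha.trans_le hρ.1) (hρ.2.trans_lt hb) θ
  have hderiv : ∀ ρ ∈ Icc a b, HasDerivAt (fun ρ => w (circleMap 0 ρ θ)) (g' ρ) ρ :=
    fun ρ hρ => ((hw.differentiableOn one_ne_zero _ (hmem ρ hρ)).differentiableAt
      (isOpen_puncturedDisk.mem_nhds (hmem ρ hρ))).hasDerivAt_comp_circleMap_radius
  have hg' : ContinuousOn g' (Icc a b) :=
    ((hw.continuousOn_fderiv_of_isOpen isOpen_puncturedDisk le_rfl).comp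
      (continuous_circleMap_uncurry.comp (Continuous.prodMk_left θ)).continuousOn hmem).clm_apply
      continuousOn_const
  have hftc : w (circleMap 0 a θ) - w (circleMap 0 b θ) ≤ ∫ ρ in a..b, |g' ρ| :=
    (le_abs_self _).trans (abs_sub_le_integral_abs_deriv hderiv hg'
      (right_mem_Icc.2 hab) (left_mem_Icc.2 hab))
  have hpointwise : ∀ ρ ∈ Ioo a b, ENNReal.ofReal |g' ρ|
      ≤ ENNReal.ofReal (t / 2)
          * (ENNReal.ofReal ρ * ENNReal.ofReal (gradNormSq w (circleMap 0 ρ θ)))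
        + ENNReal.ofReal (1 / (2 * t)) * ENNReal.ofReal ρ⁻¹ := by
    intro ρ hρ
    have hρ : 0 < ρ := ha.trans hρ.1
    rw [← ENNReal.ofReal_mul hρ.le, ← ENNReal.ofReal_mul (by positivity),
      ← ENNReal.ofReal_mul (by positivity), ← ENNReal.ofReal_add
        (mul_nonneg (by positivity) (mul_nonneg hρ.le (gradNormSq_nonneg w _))) (by positivity)]
    exact ENNReal.ofReal_le_ofReal (abs_fderiv_circleMap_radius_le w hρ ht θ)
  calc ENNReal.ofReal (w (circleMap 0 a θ) - w (circleMap 0 b θ))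
      ≤ ENNReal.ofReal (∫ ρ in a..b, |g' ρ|) := ENNReal.ofReal_le_ofReal hftc
    _ = ∫⁻ ρ in Ioo a b, ENNReal.ofReal |g' ρ| := by
        rw [intervalIntegral.integral_of_le hab, integral_Ioc_eq_integral_Ioo,
          ofReal_integral_eq_lintegral_ofReal
            (hg'.abs.integrableOn_Icc.mono_set Ioo_subset_Icc_self)
            (ae_of_all _ fun _ => abs_nonneg _)]
    _ ≤ ∫⁻ ρ in Ioo a b, (ENNReal.ofReal (t / 2)
          * (ENNReal.ofReal ρ * ENNReal.ofReal (gradNormSq w (circleMap 0 ρ θ)))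
          + ENNReal.ofReal (1 / (2 * t)) * ENNReal.ofReal ρ⁻¹) :=
        setLIntegral_mono' measurableSet_Ioo hpointwise
    _ = _ := by
        rw [lintegral_add_right _ (measurable_inv.ennreal_ofReal.const_mul _),
          lintegral_const_mul' _ _ ENNReal.ofReal_ne_top,
          lintegral_const_mul' _ _ ENNReal.ofReal_ne_top, lintegral_inv_Ioo ha hab,
          ← ENNReal.ofReal_mul (by positivity)]
        congr 2
        ring

theorem two_pi_mul_le_of_le_circleMap (hw : ContDiffOn ℝ 1 w puncturedDisk)
    (henergy : IntegrableOn (gradNormSq w) puncturedDisk) {a b : ℝ} (ha : 0 < a) (hab : a ≤ b)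
    (hb : b < 1) {m : ℝ} (hm : ∀ θ, m ≤ w (circleMap 0 a θ)) {t : ℝ} (ht : 0 < t) :
    2 * π * m ≤ (∫ θ in (-π)..π, w (circleMap 0 b θ))
      + t / 2 * (∫ z in puncturedDisk, gradNormSq w z) + π * log (b / a) / t := by
  set E := ∫ z in puncturedDisk, gradNormSq w z
  set C := ∫ θ in (-π)..π, w (circleMap 0 b θ)
  have hE : 0 ≤ E := setIntegral_nonneg isOpen_puncturedDisk.measurableSet
    fun z _ => gradNormSq_nonneg w z
  have hlog : 0 ≤ log (b / a) := log_nonneg ((one_le_div ha).2 hab)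
  have hwb : Continuous fun θ => w (circleMap 0 b θ) :=
    hw.continuousOn.comp_continuous (continuous_circleMap 0 b)
      (circleMap_mem_puncturedDisk (ha.trans_le hab) hb)
  have hmean : ∫ θ in Ioo (-π) π, (m - w (circleMap 0 b θ)) = 2 * π * m - C := by
    rw [← integral_Ioc_eq_integral_Ioo, ← intervalIntegral.integral_of_le (by linarith [pi_pos]),
      intervalIntegral.integral_sub intervalIntegrable_const (hwb.intervalIntegrable _ _),
      intervalIntegral.integral_const, smul_eq_mul]
    ring
  have key : ENNReal.ofReal (2 * π * m - C)
      ≤ ENNReal.ofReal (t / 2 * E + π * log (b / a) / t) :=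
    calc ENNReal.ofReal (2 * π * m - C)
        ≤ ∫⁻ θ in Ioo (-π) π, ENNReal.ofReal (m - w (circleMap 0 b θ)) :=
          hmean ▸ ofReal_integral_le_lintegral_ofReal _
      _ ≤ ∫⁻ θ in Ioo (-π) π, ENNReal.ofReal (w (circleMap 0 a θ) - w (circleMap 0 b θ)) :=
          lintegral_mono fun θ => ENNReal.ofReal_le_ofReal (by linarith [hm θ])
      _ ≤ ∫⁻ θ in Ioo (-π) π, (ENNReal.ofReal (t / 2) * (∫⁻ ρ in Ioo a b,
            ENNReal.ofReal ρ * ENNReal.ofReal (gradNormSq w (circleMap 0 ρ θ)))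
            + ENNReal.ofReal (log (b / a) / (2 * t))) :=
          lintegral_mono fun θ => ofReal_sub_le_lintegral_radial hw ha hab hb θ ht
      _ = ENNReal.ofReal (t / 2) * (∫⁻ p in Ioo a b ×ˢ Ioo (-π) π,
            ENNReal.ofReal p.1 * ENNReal.ofReal (gradNormSq w (circleMap 0 p.1 p.2)))
            + ENNReal.ofReal (2 * π) * ENNReal.ofReal (log (b / a) / (2 * t)) := by
          rw [lintegral_add_right _ measurable_const,
            lintegral_const_mul' _ _ ENNReal.ofReal_ne_top,
            setLIntegral_const, Real.volume_Ioo, Measure.volume_eq_prod,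
            setLIntegral_prod_symm _ (measurable_polar_gradNormSq w).aemeasurable,
            mul_comm (ENNReal.ofReal (log _ / _))]
          congr 3
          ring
      _ ≤ ENNReal.ofReal (t / 2) * ENNReal.ofReal E
            + ENNReal.ofReal (2 * π) * ENNReal.ofReal (log (b / a) / (2 * t)) := by
          gcongr
          exact setLIntegral_Ioo_prod_gradNormSq_le henergy ha.le hb.le
      _ = ENNReal.ofReal (t / 2 * E + π * log (b / a) / t) := by
          rw [← ENNReal.ofReal_mul (by positivity), ← ENNReal.ofReal_mul (by positivity),
            ← ENNReal.ofReal_add (by positivity) (by positivity)]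
          congr 1
          field_simp
  linarith [(ENNReal.ofReal_le_ofReal_iff (by positivity)).1 key]

end Radial

section KeyEstimate

variable {w : ℂ → ℝ}

theorem exists_norm_eq_le_sub_mul_log (hw : ContDiffOn ℝ 1 w puncturedDisk)
    (henergy : IntegrableOn (gradNormSq w) puncturedDisk) {r : ℝ} (hr0 : 0 < r) (hr : r < 1 / 2)
    {ε : ℝ} (hε : 0 < ε) :
    ∃ ζ₀ : ℂ, ‖ζ₀‖ = r ∧ w ζ₀ ≤ (∫ θ in (-π)..π, w (circleMap 0 (1 / 2) θ)) / (2 * π)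
      + (∫ z in puncturedDisk, gradNormSq w z) / (4 * π * ε) - ε / 2 * log r := by
  have hsphere : Metric.sphere (0 : ℂ) r ⊆ puncturedDisk := fun ζ hζ => by
    rw [mem_sphere_zero_iff_norm] at hζ
    exact ⟨hζ ▸ hr0, hζ ▸ hr.trans (by norm_num)⟩
  obtain ⟨ζ₀, hζ₀, hmin⟩ := (isCompact_sphere (0 : ℂ) r).exists_isMinOn
    (NormedSpace.sphere_nonempty.2 hr0.le) (hw.continuousOn.mono hsphere)
  refine ⟨ζ₀, mem_sphere_zero_iff_norm.1 hζ₀, ?_⟩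
  -- AM-GM with parameter `t = 1 / ε` makes the radial term `(ε / 2) log (1 / (2 r))`
  have hmean := two_pi_mul_le_of_le_circleMap hw henergy hr0 hr.le (by norm_num)
    (fun θ => hmin (circleMap_mem_sphere 0 hr0.le θ)) (one_div_pos.2 hε)
  have hlog_half : π * log (1 / 2 / r) / (1 / ε) ≤ π * ε * -log r := by
    rw [log_div (by norm_num) hr0.ne']
    have := log_neg (by norm_num : (0 : ℝ) < 1 / 2) (by norm_num)
    field_simp
    nlinarith [pi_pos]
  rw [← sub_nonneg]
  have hrw : (∫ θ in (-π)..π, w (circleMap 0 (1 / 2) θ)) / (2 * π)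
      + (∫ z in puncturedDisk, gradNormSq w z) / (4 * π * ε) - ε / 2 * log r - w ζ₀
      = ((∫ θ in (-π)..π, w (circleMap 0 (1 / 2) θ))
        + 1 / ε / 2 * (∫ z in puncturedDisk, gradNormSq w z) + π * ε * -log r - 2 * π * w ζ₀)
        / (2 * π) := by
    field_simp
    ring
  rw [hrw]
  exact div_nonneg (by linarith) (by positivity)

theorem exists_radius_forall_norm_eq_add_mul_log_le (hw : ContDiffOn ℝ 1 w puncturedDisk)
    (henergy : IntegrableOn (gradNormSq w) puncturedDisk) {ε : ℝ} (hε : 0 < ε) {c : ℝ}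
    (hc : 0 < c) (A : ℝ) :
    ∃ r ∈ Ioo 0 c, ∀ ζ : ℂ, ‖ζ‖ = r → w ζ + ε * log r ≤ A := by
  set K := (∫ θ in (-π)..π, w (circleMap 0 (1 / 2) θ)) / (2 * π)
    + (∫ z in puncturedDisk, gradNormSq w z) / (4 * π * ε) + 1 / 2 + π
  obtain ⟨r, ⟨hr0, hr⟩, hsmall⟩ := exists_radius_sq_mul_integral_gradNormSq_le_one hw henergy
    (c := min (min c (1 / 2)) (exp (2 * (A - K) / ε))) (by positivity)
    ((min_le_left _ _).trans ((min_le_right _ _).trans (by norm_num)))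
  have hrc : r < c := hr.trans_le ((min_le_left _ _).trans (min_le_left _ _))
  have hr_half : r < 1 / 2 := hr.trans_le ((min_le_left _ _).trans (min_le_right _ _))
  have hlog_small : ε / 2 * log r < A - K :=
    calc ε / 2 * log r < ε / 2 * (2 * (A - K) / ε) :=
          mul_lt_mul_of_pos_left ((log_lt_iff_lt_exp hr0).2 (hr.trans_le (min_le_right _ _)))
            (half_pos hε)
      _ = A - K := by field_simp
  obtain ⟨ζ₀, hζ₀, hζ₀_le⟩ := exists_norm_eq_le_sub_mul_log hw henergy hr0 hr_half hε
  refine ⟨r, ⟨hr0, hrc⟩, fun ζ hζ => ?_⟩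
  have hosc := le_add_integral_gradNormSq_of_norm_eq hw hr0 (hr_half.trans (by norm_num)) hζ hζ₀
  simp only [K] at hlog_small
  linarith

end KeyEstimate

theorem add_mul_log_norm_le_of_annulus {w : ℂ → ℝ} (hw : ContDiffOn ℝ 2 w puncturedDisk)
    (hΔ : ∀ ζ ∈ puncturedDisk, 0 ≤ Δ w ζ) (hcont : ContinuousOn w {ζ : ℂ | 0 < ‖ζ‖ ∧ ‖ζ‖ ≤ 1})
    {r ε M : ℝ} (hr : 0 < r) (hinner : ∀ ζ : ℂ, ‖ζ‖ = r → w ζ + ε * log r ≤ M)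
    (houter : ∀ ζ : ℂ, ‖ζ‖ = 1 → w ζ ≤ M) {z : ℂ} (hrz : r ≤ ‖z‖) (hz : ‖z‖ ≤ 1) :
    w z + ε * log ‖z‖ ≤ M := by
  set K := {ζ : ℂ | r ≤ ‖ζ‖ ∧ ‖ζ‖ ≤ 1}
  set U := {ζ : ℂ | r < ‖ζ‖ ∧ ‖ζ‖ < 1}
  have hK : IsCompact K :=
    (isCompact_closedBall (0 : ℂ) 1).of_isClosed_subset
      ((isClosed_le continuous_const continuous_norm).inter
        (isClosed_le continuous_norm continuous_const))
      fun ζ hζ => mem_closedBall_zero_iff.2 hζ.2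
  have hU : IsOpen U :=
    (isOpen_lt continuous_const continuous_norm).inter (isOpen_lt continuous_norm continuous_const)
  have hUdisk : U ⊆ puncturedDisk := fun ζ hζ => ⟨hr.trans hζ.1, hζ.2⟩
  have hsmooth : ∀ ζ ∈ U, ContDiffAt ℝ 2 w ζ := fun ζ hζ =>
    hw.contDiffAt (isOpen_puncturedDisk.mem_nhds (hUdisk hζ))
  refine hK.le_of_laplacian_nonneg (v := fun ζ => w ζ + ε * log ‖ζ‖) hU
    (fun ζ hζ => ⟨hζ.1.le, hζ.2.le⟩) ?_ (fun ζ hζ => ?_) (fun ζ hζ => ?_) (fun ζ hζ => ?_) ⟨hrz, hz⟩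
  · refine (hcont.mono fun ζ hζ => ⟨hr.trans_le hζ.1, hζ.2⟩).add
      (continuousOn_const.mul (continuous_norm.continuousOn.log fun ζ hζ => ?_))
    exact (hr.trans_le hζ.1).ne'
  · have hζ0 : ζ ≠ 0 := norm_pos_iff.1 (hr.trans hζ.1)
    exact (hsmooth ζ hζ).add (contDiffAt_const.mul (analyticAt_id.harmonicAt_log_norm hζ0).1)
  · rw [laplacian_add_const_mul_log_norm (hsmooth ζ hζ) (norm_pos_iff.1 (hr.trans hζ.1))]
    exact hΔ ζ (hUdisk hζ)
  · obtain ⟨⟨hζr, hζ1⟩, hζU⟩ := hζ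
    rcases hζr.eq_or_lt with hζr | hζr
    · simpa [← hζr] using hinner ζ hζr.symm
    · have hζ1 : ‖ζ‖ = 1 := le_antisymm hζ1 (not_lt.1 fun h => hζU ⟨hζr, h⟩)
      simpa [hζ1] using houter ζ hζ1

/-- A subharmonic function of finite energy on the punctured unit disk satisfies the
maximum principle with respect to the exterior boundary circle alone. -/
theorem statement12 (w : ℂ → ℝ)
    (hC2 : ContDiffOn ℝ 2 w {z : ℂ | 0 < ‖z‖ ∧ ‖z‖ < 1})
    (hsub : ∀ z : ℂ, 0 < ‖z‖ → ‖z‖ < 1 → 0 ≤ lap w z)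
    (hcont : ContinuousOn w {z : ℂ | 0 < ‖z‖ ∧ ‖z‖ ≤ 1})
    (henergy : IntegrableOn (fun z => pdX w z ^ 2 + pdY w z ^ 2)
      {z : ℂ | 0 < ‖z‖ ∧ ‖z‖ < 1})
    (z : ℂ) (hz0 : 0 < ‖z‖) (hz1 : ‖z‖ < 1) :
    w z ≤ sSup (w '' Metric.sphere (0 : ℂ) 1) := by
  set M := sSup (w '' Metric.sphere (0 : ℂ) 1)
  have hsphere : Metric.sphere (0 : ℂ) 1 ⊆ {z : ℂ | 0 < ‖z‖ ∧ ‖z‖ ≤ 1} := fun ζ hζ => by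
    rw [mem_sphere_zero_iff_norm] at hζ
    exact ⟨hζ ▸ one_pos, hζ.le⟩
  have houter : ∀ ζ : ℂ, ‖ζ‖ = 1 → w ζ ≤ M := fun ζ hζ =>
    le_csSup ((isCompact_sphere 0 1).image_of_continuousOn (hcont.mono hsphere)).bddAbove
      ⟨ζ, mem_sphere_zero_iff_norm.2 hζ, rfl⟩
  have hΔ : ∀ ζ ∈ puncturedDisk, 0 ≤ Δ w ζ := fun ζ hζ =>
    lap_eq_laplacian (hC2.contDiffAt (isOpen_puncturedDisk.mem_nhds hζ)) ▸ hsub ζ hζ.1 hζ.2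
  have hperturbed : ∀ ε > 0, w z + ε * log ‖z‖ ≤ M := fun ε hε => by
    obtain ⟨r, ⟨hr0, hrz⟩, hinner⟩ :=
      exists_radius_forall_norm_eq_add_mul_log_le (hC2.of_le one_le_two) henergy hε hz0 M
    exact add_mul_log_norm_le_of_annulus hC2 hΔ hcont hr0 hinner houter hrz.le hz1.le
  have hlim : Tendsto (fun ε => M - ε * log ‖z‖) (𝓝[>] 0) (𝓝 M) := by
    have hline : Continuous fun ε : ℝ => M - ε * log ‖z‖ := by fun_prop
    simpa using (hline.tendsto 0).mono_left nhdsWithin_le_nhds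
  exact ge_of_tendsto hlim (eventually_nhdsWithin_of_forall fun ε hε => by
    linarith [hperturbed ε hε])
end
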